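/- arXiv:2011.08166 — 7 statements merged into one kernel-verified Lean document; each statement's English description precedes it below -/
import Mathlib

section
/- Let x ∈ ℝⁿ. Then ‖𝒢(x)‖ ≤ dist(0; ∇f(x) + ∂g(x)), where ∇f(x) + ∂g(x) = {∇f(x) + v : v ∈ ∂g(x)}. -/
open scoped RealInnerProductSpace
open Metric Set Filter

noncomputable section

abbrev En (n : ℕ) : Type := EuclideanSpace ℝ (Fin n)

/-- Convex subdifferential of an extended-real-valued function `g` at `x`. -/
def ESubdiff {n : ℕ} (g : En n → EReal) (x : En n) : Set (En n) :=
  {v | ∀ y, g x + ((⟪v, y - x⟫ : ℝ) : EReal) ≤ g y}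

/-- `g` is proper: it never takes the value `-∞` and is finite somewhere. -/
def ProperFun {n : ℕ} (g : En n → EReal) : Prop :=
  (∀ x, g x ≠ ⊥) ∧ ∃ x, g x ≠ ⊤

/-- Convexity for extended-real-valued functions. -/
def EConvexOn {n : ℕ} (g : En n → EReal) : Prop :=
  ∀ x y : En n, ∀ a b : ℝ, 0 ≤ a → 0 ≤ b → a + b = 1 →
    g (a • x + b • y) ≤ (a : EReal) * g x + (b : EReal) * g y

/-- `p` minimizes `y ↦ g y + ‖y - u‖ ^ 2 / 2`. -/
def IsProxPt {n : ℕ} (g : En n → EReal) (u p : En n) : Prop :=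
  ∀ y, g p + ((‖p - u‖ ^ 2 / 2 : ℝ) : EReal) ≤ g y + ((‖y - u‖ ^ 2 / 2 : ℝ) : EReal)

/-- `prox` maps each `u` to the unique minimizer of `y ↦ g y + ‖y - u‖ ^ 2 / 2`. -/
def IsProxMap {n : ℕ} (g : En n → EReal) (prox : En n → En n) : Prop :=
  ∀ u, IsProxPt g u (prox u) ∧ ∀ p, IsProxPt g u p → p = prox u

/-- The solution set `𝒳* = argmin (f + g)`. -/
def ArgminSet {n : ℕ} (f : En n → ℝ) (g : En n → EReal) : Set (En n) :=
  {x | ∀ y, (f x : EReal) + g x ≤ (f y : EReal) + g y}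

/-- The prox-gradient mapping `𝒢 x = x - Prox_g (x - ∇f x)`. -/
def Gmap {n : ℕ} (f' prox : En n → En n) (x : En n) : En n :=
  x - prox (x - f' x)

/-! The prox point `p` of `u` satisfies the variational inequality `u - p ∈ ∂g(p)`: moving from `p`
a fraction `t` towards any `y` and using convexity of `g` gives
`g p ≤ g y + ⟪p - u, y - p⟫ + t / 2 * ‖y - p‖²`, and `t → 0⁺` removes the last term. With
`u = x - ∇f(x)` and `p = Prox_g u`, monotonicity of `∂g` applied to `v ∈ ∂g(x)` and `u - p ∈ ∂g(p)`
yields `‖𝒢(x)‖² ≤ ⟪∇f(x) + v, 𝒢(x)⟫`, and Cauchy–Schwarz finishes. -/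

open scoped Topology

theorem norm_le_of_norm_sq_le_inner {E : Type*} [NormedAddCommGroup E] [InnerProductSpace ℝ E]
    {a b : E} (h : ‖a‖ ^ 2 ≤ ⟪b, a⟫) : ‖a‖ ≤ ‖b‖ := by
  rcases (norm_nonneg a).eq_or_lt with ha | ha
  · exact ha ▸ norm_nonneg b
  · refine le_of_mul_le_mul_right ?_ ha
    calc ‖a‖ * ‖a‖ = ‖a‖ ^ 2 := (sq _).symm
      _ ≤ ⟪b, a⟫ := h
      _ ≤ ‖b‖ * ‖a‖ := real_inner_le_norm b a

theorem le_of_forall_pos_le_add_mul {a b c : ℝ} (h : ∀ t : ℝ, 0 < t → t ≤ 1 → a ≤ b + t * c) :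
    a ≤ b := by
  have hlim : Tendsto (fun t : ℝ => b + t * c) (𝓝[>] 0) (𝓝 b) := by
    have : Continuous fun t : ℝ => b + t * c := by fun_prop
    simpa using (this.tendsto 0).mono_left nhdsWithin_le_nhds
  refine ge_of_tendsto hlim ?_
  filter_upwards [Ioc_mem_nhdsGT one_pos] with t ht using h t ht.1 ht.2

variable {n : ℕ} {g : En n → EReal}

theorem ne_top_of_mem_ESubdiff (hg : ∃ y, g y ≠ ⊤) {x v : En n} (hv : v ∈ ESubdiff g x) :
    g x ≠ ⊤ := by
  obtain ⟨y, hy⟩ := hg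
  intro hx
  have := hv y
  rw [hx, EReal.top_add_of_ne_bot (EReal.coe_ne_bot _), top_le_iff] at this
  exact hy this

theorem ESubdiff.inner_sub_sub_nonneg (hg : ProperFun g) {x y v w : En n}
    (hv : v ∈ ESubdiff g x) (hw : w ∈ ESubdiff g y) : 0 ≤ ⟪v - w, x - y⟫ := by
  obtain ⟨a, ha⟩ : ∃ a : ℝ, g x = a :=
    ⟨(g x).toReal, (EReal.coe_toReal (ne_top_of_mem_ESubdiff hg.2 hv) (hg.1 x)).symm⟩
  obtain ⟨b, hb⟩ : ∃ b : ℝ, g y = b :=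
    ⟨(g y).toReal, (EReal.coe_toReal (ne_top_of_mem_ESubdiff hg.2 hw) (hg.1 y)).symm⟩
  have hvy : a + ⟪v, y - x⟫ ≤ b := by exact_mod_cast ha ▸ hb ▸ hv y
  have hwx : b + ⟪w, x - y⟫ ≤ a := by exact_mod_cast ha ▸ hb ▸ hw x
  have hyx : y - x = -(x - y) := (neg_sub x y).symm
  rw [hyx, inner_neg_right] at hvy
  rw [inner_sub_left]
  linarith

namespace IsProxPt

variable {u p : En n}

theorem ne_top (hg : ∃ y, g y ≠ ⊤) (hp : IsProxPt g u p) : g p ≠ ⊤ := by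
  obtain ⟨y, hy⟩ := hg
  intro hpt
  have := hp y
  rw [hpt, EReal.top_add_of_ne_bot (EReal.coe_ne_bot _), top_le_iff] at this
  exact EReal.add_ne_top hy (EReal.coe_ne_top _) this

theorem le_add_inner_add_sq (hgconv : EConvexOn g) (hp : IsProxPt g u p) {y : En n} {a b : ℝ}
    (ha : g p = a) (hb : g y = b) {t : ℝ} (ht0 : 0 < t) (ht1 : t ≤ 1) :
    a ≤ b + ⟪p - u, y - p⟫ + t * (‖y - p‖ ^ 2 / 2) := by
  have hseg : (1 - t) • p + t • y = p + t • (y - p) := by module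
  have hconv := hgconv p y (1 - t) t (by linarith) ht0.le (by ring)
  rw [hseg, ha, hb] at hconv
  have hmin : a + ‖p - u‖ ^ 2 / 2 ≤ (1 - t) * a + t * b + ‖p + t • (y - p) - u‖ ^ 2 / 2 := by
    have := (ha ▸ hp (p + t • (y - p))).trans (add_le_add_left hconv _)
    exact_mod_cast this
  have hexpand : ‖p + t • (y - p) - u‖ ^ 2 =
      ‖p - u‖ ^ 2 + 2 * (t * ⟪p - u, y - p⟫) + t ^ 2 * ‖y - p‖ ^ 2 := by
    rw [show p + t • (y - p) - u = (p - u) + t • (y - p) by abel, norm_add_sq_real,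
      real_inner_smul_right, norm_smul, Real.norm_of_nonneg ht0.le, mul_pow]
  rw [hexpand] at hmin
  have hscaled : t * a ≤ t * (b + ⟪p - u, y - p⟫ + t * (‖y - p‖ ^ 2 / 2)) := by linarith
  exact le_of_mul_le_mul_left hscaled ht0

theorem sub_mem_ESubdiff (hg : ProperFun g) (hgconv : EConvexOn g) (hp : IsProxPt g u p) :
    u - p ∈ ESubdiff g p := by
  intro y
  by_cases hyt : g y = ⊤
  · exact hyt ▸ le_top
  obtain ⟨a, ha⟩ : ∃ a : ℝ, g p = a :=
    ⟨(g p).toReal, (EReal.coe_toReal (hp.ne_top hg.2) (hg.1 p)).symm⟩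
  obtain ⟨b, hb⟩ : ∃ b : ℝ, g y = b := ⟨(g y).toReal, (EReal.coe_toReal hyt (hg.1 y)).symm⟩
  have hvar : a ≤ b + ⟪p - u, y - p⟫ := le_of_forall_pos_le_add_mul fun t ht0 ht1 =>
    hp.le_add_inner_add_sq hgconv ha hb ht0 ht1
  have hneg : ⟪u - p, y - p⟫ = -⟪p - u, y - p⟫ := by rw [← inner_neg_left, neg_sub]
  rw [ha, hb]
  exact_mod_cast (by linarith : a + ⟪u - p, y - p⟫ ≤ b)

end IsProxPt

theorem norm_Gmap_le_dist_subdiff_general {n : ℕ}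
    (f' : En n → En n) (g : En n → EReal) (prox : En n → En n)
    (hgproper : ProperFun g) (hgconv : EConvexOn g)
    (hprox : IsProxMap g prox)
    (x : En n) (v : En n) (hv : v ∈ ESubdiff g x) :
    ‖Gmap f' prox x‖ ≤ ‖f' x + v‖ := by
  set p := prox (x - f' x)
  have hsub : x - f' x - p ∈ ESubdiff g p := ((hprox _).1).sub_mem_ESubdiff hgproper hgconv
  have hmono := ESubdiff.inner_sub_sub_nonneg hgproper hv hsub
  have hdir : v - (x - f' x - p) = (f' x + v) - (x - p) := by abel
  rw [hdir, inner_sub_left, real_inner_self_eq_norm_sq] at hmono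
  show ‖x - p‖ ≤ _
  exact norm_le_of_norm_sq_le_inner (by linarith)

/-- For every `x`, `‖𝒢(x)‖ ≤ dist(0, ∇f(x) + ∂g(x))`, i.e.
`‖𝒢(x)‖ ≤ ‖∇f(x) + v‖` for every subgradient `v ∈ ∂g(x)`. -/
theorem norm_Gmap_le_dist_subdiff {n : ℕ}
    (f : En n → ℝ) (f' : En n → En n) (g : En n → EReal) (prox : En n → En n)
    (L₁ : ℝ) (hL₁ : 0 < L₁)
    (hfconv : ConvexOn ℝ Set.univ f)
    (hgrad : ∀ x, HasGradientAt f (f' x) x)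
    (hgradcont : Continuous f')
    (hlip : ∀ x y : En n, ‖f' x - f' y‖ ≤ L₁ * ‖x - y‖)
    (hgproper : ProperFun g) (hglsc : LowerSemicontinuous g) (hgconv : EConvexOn g)
    (hprox : IsProxMap g prox)
    (hXne : (ArgminSet f g).Nonempty)
    (x : En n) (v : En n) (hv : v ∈ ESubdiff g x) :
    ‖Gmap f' prox x‖ ≤ ‖f' x + v‖ :=
  norm_Gmap_le_dist_subdiff_general f' g prox hgproper hgconv hprox x v hv
end
end

section
/- Let x̄ ∈ 𝒳* and suppose there exist ε > 0 and κ > 0 such that dist(x; 𝒳*) ≤ κ · dist(0; ∇f(x) + ∂g(x)) for all x with ‖x − x̄‖ < ε (i.e., the mapping x ↦ ∇f(x) + ∂g(x) is metrically subregular at (x̄, 0)). Then dist(x; 𝒳*) ≤ (1 + κ)(1 + L₁)‖𝒢(x)‖ for all x with ‖x − x̄‖ < ε. -/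
open scoped RealInnerProductSpace
open Metric Set Filter

noncomputable section

namespace DistAux

open Topology

variable {n : ℕ}

/-- Derivative of `f` along a line, from the gradient. -/
lemma line_hasDerivAt (f : En n → ℝ) (f' : En n → En n)
    (hgrad : ∀ x, HasGradientAt f (f' x) x) (a v : En n) (t : ℝ) :
    HasDerivAt (fun s : ℝ => f (a + s • v)) ⟪f' (a + t • v), v⟫ t := by
  have hline : HasDerivAt (fun s : ℝ => a + s • v) v t := by
    simpa using ((hasDerivAt_id t).smul_const v).const_add a
  have hg := (hgrad (a + t • v)).hasFDerivAt
  have h := hg.comp_hasDerivAt t hline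
  exact h

/-- Gradient inequality for a convex differentiable function. -/
lemma grad_ineq (f : En n → ℝ) (f' : En n → En n) (hfconv : ConvexOn ℝ Set.univ f)
    (hgrad : ∀ x, HasGradientAt f (f' x) x) (a b : En n) :
    f a + ⟪f' a, b - a⟫ ≤ f b := by
  set v := b - a with hv
  have hd : HasDerivAt (fun s : ℝ => f (a + s • v)) ⟪f' a, v⟫ 0 := by
    simpa using line_hasDerivAt f f' hgrad a v 0
  have hslope : Tendsto (slope (fun s : ℝ => f (a + s • v)) 0) (𝓝[>] 0) (𝓝 ⟪f' a, v⟫) := by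
    refine (hasDerivAt_iff_tendsto_slope.1 hd).mono_left (nhdsWithin_mono _ ?_)
    intro x hx
    exact ne_of_gt hx
  have key : ∀ᶠ t in 𝓝[>] (0:ℝ), slope (fun s : ℝ => f (a + s • v)) 0 t ≤ f b - f a := by
    filter_upwards [Ioo_mem_nhdsGT_of_mem (by constructor <;> norm_num : (0:ℝ) ∈ Ico 0 1)]
      with t ht
    have h1t : (0:ℝ) ≤ 1 - t := by linarith [ht.2]
    have hcomb := hfconv.2 (mem_univ a) (mem_univ b) h1t (le_of_lt ht.1) (by ring)
    have hpt : a + t • v = (1 - t) • a + t • b := by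
      rw [hv]; module
    have hval : f (a + t • v) ≤ f a + t * (f b - f a) := by
      rw [hpt]
      calc f ((1 - t) • a + t • b) ≤ (1 - t) * f a + t * f b := hcomb
        _ = f a + t * (f b - f a) := by ring
    have h0 : f (a + (0:ℝ) • v) = f a := by simp
    rw [slope_def_field, sub_zero, h0, div_le_iff₀ ht.1]
    linarith [hval]
  have := le_of_tendsto hslope key
  linarith [this]

/-- Descent lemma for a function with Lipschitz gradient. -/
lemma descent (f : En n → ℝ) (f' : En n → En n) (L₁ : ℝ)
    (hgrad : ∀ x, HasGradientAt f (f' x) x)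
    (hlip : ∀ x y : En n, ‖f' x - f' y‖ ≤ L₁ * ‖x - y‖) (a b : En n) :
    f b ≤ f a + ⟪f' a, b - a⟫ + L₁ / 2 * ‖b - a‖ ^ 2 := by
  set v := b - a with hv
  set ψ : ℝ → ℝ := fun t => f (a + t • v) - t * ⟪f' a, v⟫ - t ^ 2 * (L₁ * ‖v‖ ^ 2) / 2
    with hψ
  have hψd : ∀ t : ℝ, HasDerivAt ψ
      (⟪f' (a + t • v), v⟫ - ⟪f' a, v⟫ - t * (L₁ * ‖v‖ ^ 2)) t := by
    intro t
    have h1 := line_hasDerivAt f f' hgrad a v t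
    have h2 : HasDerivAt (fun s : ℝ => s * ⟪f' a, v⟫) ⟪f' a, v⟫ t := by
      simpa using (hasDerivAt_id t).mul_const ⟪f' a, v⟫
    have h3 : HasDerivAt (fun s : ℝ => s ^ 2 * (L₁ * ‖v‖ ^ 2) / 2)
        (t * (L₁ * ‖v‖ ^ 2)) t := by
      have := ((hasDerivAt_pow 2 t).mul_const (L₁ * ‖v‖ ^ 2)).div_const 2
      exact this.congr_deriv (by ring)
    exact (h1.sub h2).sub h3
  have hmono : AntitoneOn ψ (Icc (0:ℝ) 1) := by
    apply antitoneOn_of_deriv_nonpos (convex_Icc 0 1)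
    · have hdiff : Differentiable ℝ ψ := fun t => (hψd t).differentiableAt
      exact hdiff.continuous.continuousOn
    · intro t _
      exact (hψd t).differentiableAt.differentiableWithinAt
    · intro t ht
      rw [interior_Icc] at ht
      rw [(hψd t).deriv]
      have hib : ⟪f' (a + t • v), v⟫ - ⟪f' a, v⟫ = ⟪f' (a + t • v) - f' a, v⟫ := by
        rw [inner_sub_left]
      rw [hib]
      have hcs : ⟪f' (a + t • v) - f' a, v⟫ ≤ ‖f' (a + t • v) - f' a‖ * ‖v‖ :=
        real_inner_le_norm _ _
      have hlipb : ‖f' (a + t • v) - f' a‖ ≤ L₁ * (t * ‖v‖) := by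
        have := hlip (a + t • v) a
        simpa [norm_smul, abs_of_pos ht.1] using this
      have hv0 : (0:ℝ) ≤ ‖v‖ := norm_nonneg _
      nlinarith [ht.1.le, hv0, hcs, hlipb, norm_nonneg (f' (a + t • v) - f' a)]
  have h01 : ψ 1 ≤ ψ 0 := hmono (by constructor <;> norm_num) (by constructor <;> norm_num)
    (by norm_num)
  have hψ0 : ψ 0 = f a := by simp [hψ]
  have hab : a + (1:ℝ) • v = b := by rw [hv]; module
  have hψ1 : ψ 1 = f b - ⟪f' a, v⟫ - L₁ * ‖v‖ ^ 2 / 2 := by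
    simp only [hψ]
    rw [hab]
    ring
  rw [hψ0, hψ1] at h01
  rw [hv] at h01
  linarith

/-- The two-point strengthened gradient inequality. -/
lemma grad_ineq_strong (f : En n → ℝ) (f' : En n → En n) (L₁ : ℝ) (hL₁ : 0 < L₁)
    (hfconv : ConvexOn ℝ Set.univ f)
    (hgrad : ∀ x, HasGradientAt f (f' x) x)
    (hlip : ∀ x y : En n, ‖f' x - f' y‖ ≤ L₁ * ‖x - y‖) (p q : En n) :
    f p + ⟪f' p, q - p⟫ + ‖f' q - f' p‖ ^ 2 / (2 * L₁) ≤ f q := by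
  set Φ := f' q - f' p with hΦ
  set w := q - (1 / L₁) • Φ with hw
  have h1 := grad_ineq f f' hfconv hgrad p w
  have h2 := descent f f' L₁ hgrad hlip q w
  have hwq : w - q = -((1 / L₁) • Φ) := by rw [hw]; abel
  have hwp : w - p = (q - p) - (1 / L₁) • Φ := by rw [hw]; abel
  have e1 : ⟪f' p, w - p⟫ = ⟪f' p, q - p⟫ - (1 / L₁) * ⟪f' p, Φ⟫ := by
    rw [hwp, inner_sub_right, real_inner_smul_right]
  have e2 : ⟪f' q, w - q⟫ = -((1 / L₁) * ⟪f' q, Φ⟫) := by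
    rw [hwq, inner_neg_right, real_inner_smul_right]
  have e3 : ‖w - q‖ ^ 2 = (1 / L₁) ^ 2 * ‖Φ‖ ^ 2 := by
    rw [hwq, norm_neg, norm_smul, mul_pow, Real.norm_eq_abs, sq_abs]
  have e4 : ⟪f' q, Φ⟫ - ⟪f' p, Φ⟫ = ‖Φ‖ ^ 2 := by
    rw [← inner_sub_left, ← hΦ, real_inner_self_eq_norm_sq]
  rw [e1] at h1
  rw [e2, e3] at h2
  have hL₁' : L₁ ≠ 0 := ne_of_gt hL₁
  have h12 := le_trans h1 h2
  have hexp : (1 / L₁) * ⟪f' q, Φ⟫ - (1 / L₁) * ⟪f' p, Φ⟫ = ‖Φ‖ ^ 2 / L₁ := by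
    have hfac : (1 / L₁) * ⟪f' q, Φ⟫ - (1 / L₁) * ⟪f' p, Φ⟫
        = (⟪f' q, Φ⟫ - ⟪f' p, Φ⟫) / L₁ := by ring
    rw [hfac, e4]
  have hq2 : L₁ / 2 * ((1 / L₁) ^ 2 * ‖Φ‖ ^ 2) = ‖Φ‖ ^ 2 / (2 * L₁) := by
    field_simp
  have h4 : ‖Φ‖ ^ 2 / L₁ - ‖Φ‖ ^ 2 / (2 * L₁) = ‖Φ‖ ^ 2 / (2 * L₁) := by
    field_simp
    ring
  linarith [h12, hexp, hq2, h4]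

/-- Cocoercivity (Baillon–Haddad, two-point form). -/
lemma coco (f : En n → ℝ) (f' : En n → En n) (L₁ : ℝ) (hL₁ : 0 < L₁)
    (hfconv : ConvexOn ℝ Set.univ f)
    (hgrad : ∀ x, HasGradientAt f (f' x) x)
    (hlip : ∀ x y : En n, ‖f' x - f' y‖ ≤ L₁ * ‖x - y‖) (a b : En n) :
    ‖f' a - f' b‖ ^ 2 ≤ L₁ * ⟪f' a - f' b, a - b⟫ := by
  have k1 := grad_ineq_strong f f' L₁ hL₁ hfconv hgrad hlip a b
  have k2 := grad_ineq_strong f f' L₁ hL₁ hfconv hgrad hlip b a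
  have hn : ‖f' a - f' b‖ = ‖f' b - f' a‖ := norm_sub_rev _ _
  have hi : ⟪f' a, b - a⟫ + ⟪f' b, a - b⟫ = -⟪f' a - f' b, a - b⟫ := by
    rw [show b - a = -(a - b) from by abel, inner_neg_right, inner_sub_left]
    ring
  have hsum : ‖f' b - f' a‖ ^ 2 / (2 * L₁) + ‖f' a - f' b‖ ^ 2 / (2 * L₁)
      ≤ ⟪f' a - f' b, a - b⟫ := by linarith [k1, k2, hi]
  rw [← hn] at hsum
  have : ‖f' a - f' b‖ ^ 2 / L₁ ≤ ⟪f' a - f' b, a - b⟫ := by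
    have he : ‖f' a - f' b‖ ^ 2 / (2 * L₁) + ‖f' a - f' b‖ ^ 2 / (2 * L₁)
        = ‖f' a - f' b‖ ^ 2 / L₁ := by field_simp; ring
    linarith [he ▸ hsum]
  calc ‖f' a - f' b‖ ^ 2 = L₁ * (‖f' a - f' b‖ ^ 2 / L₁) := by field_simp
    _ ≤ L₁ * ⟪f' a - f' b, a - b⟫ := by
        exact mul_le_mul_of_nonneg_left this hL₁.le

/-- If `q` minimizes `φ + g` where `φ` has a one-sided quadratic expansion with
linear term `⟪dvec, ·⟫` at `q`, then `-dvec` is a subgradient of `g` at `q`. -/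
lemma subgrad_of_min (g : En n → EReal) (hgproper : ProperFun g) (hgconv : EConvexOn g)
    (φ : En n → ℝ) (Cq : En n → ℝ) (q dvec : En n)
    (hexp : ∀ y : En n, ∀ t : ℝ, t ∈ Set.Ioo (0:ℝ) 1 →
      φ (q + t • (y - q)) ≤ φ q + t * ⟪dvec, y - q⟫ + t ^ 2 * Cq y)
    (hmin : ∀ w, (φ q : EReal) + g q ≤ (φ w : EReal) + g w) :
    (-dvec) ∈ ESubdiff g q := by
  obtain ⟨y₀, hy₀⟩ := hgproper.2
  have hq_ne_top : g q ≠ ⊤ := by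
    intro htop
    have h := hmin y₀
    rw [htop] at h
    have hL : ((φ q : ℝ) : EReal) + ⊤ = ⊤ := by simp
    rw [hL] at h
    set r := (g y₀).toReal with hr
    have hgy₀ : g y₀ = (r : EReal) := (EReal.coe_toReal hy₀ (hgproper.1 y₀)).symm
    rw [hgy₀, ← EReal.coe_add] at h
    exact EReal.coe_ne_top _ (top_le_iff.1 h)
  intro y
  by_cases hy : g y = ⊤
  · rw [hy]; exact le_top
  set gq := (g q).toReal with hgq_def
  set gy := (g y).toReal with hgy_def
  have hgq : g q = (gq : EReal) := (EReal.coe_toReal hq_ne_top (hgproper.1 q)).symm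
  have hgy : g y = (gy : EReal) := (EReal.coe_toReal hy (hgproper.1 y)).symm
  have hreal : ∀ t : ℝ, t ∈ Set.Ioo (0:ℝ) 1 →
      gq + ⟪-dvec, y - q⟫ ≤ gy + t * Cq y := by
    intro t ht
    have hw := hmin (q + t • (y - q))
    have hconv := hgconv q y (1 - t) t (by linarith [ht.2]) ht.1.le (by ring)
    have hptw : q + t • (y - q) = (1 - t) • q + t • y := by module
    rw [← hptw] at hconv
    have hconv' : g (q + t • (y - q)) ≤ (((1 - t) * gq + t * gy : ℝ) : EReal) := by
      rw [hgq, hgy] at hconv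
      calc g (q + t • (y - q))
          ≤ ((1 - t : ℝ) : EReal) * ((gq : ℝ) : EReal) + ((t : ℝ) : EReal) * ((gy : ℝ) : EReal) :=
            hconv
        _ = (((1 - t) * gq + t * gy : ℝ) : EReal) := by
            rw [← EReal.coe_mul, ← EReal.coe_mul, ← EReal.coe_add]
    have hchain : ((φ q + gq : ℝ) : EReal)
        ≤ ((φ (q + t • (y - q)) + ((1 - t) * gq + t * gy) : ℝ) : EReal) := by
      rw [EReal.coe_add, EReal.coe_add]
      rw [hgq] at hw
      exact le_trans hw (add_le_add_right hconv' _)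
    have hchainr := EReal.coe_le_coe_iff.1 hchain
    have hexp' := hexp y t ht
    have ht0 : (0:ℝ) < t := ht.1
    have hlin : t * gq ≤ t * (⟪dvec, y - q⟫ + t * Cq y + gy) := by nlinarith [hchainr, hexp']
    have hdiv : gq ≤ ⟪dvec, y - q⟫ + t * Cq y + gy := (mul_le_mul_iff_right₀ ht0).1 hlin
    have hneg : ⟪-dvec, y - q⟫ = -⟪dvec, y - q⟫ := by rw [inner_neg_left]
    rw [hneg]
    linarith [hdiv]
  have hfin : gq + ⟪-dvec, y - q⟫ ≤ gy := by
    refine le_of_forall_pos_le_add ?_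
    intro ε hε
    set M := |Cq y| + 1 with hM
    have hM0 : (0:ℝ) < M := by positivity
    set t : ℝ := min (1/2) (ε / M) with htdef
    have ht : t ∈ Set.Ioo (0:ℝ) 1 := by
      constructor
      · exact lt_min (by norm_num) (div_pos hε hM0)
      · calc t ≤ 1/2 := min_le_left _ _
          _ < 1 := by norm_num
    have h := hreal t ht
    have htM : t * Cq y ≤ ε := by
      have h1 : t ≤ ε / M := min_le_right _ _
      have h2 : Cq y ≤ M := by rw [hM]; linarith [le_abs_self (Cq y)]
      have ht0 : (0:ℝ) < t := ht.1
      calc t * Cq y ≤ t * M := by nlinarith [h2, ht0.le]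
        _ ≤ (ε / M) * M := by nlinarith [h1, hM0.le]
        _ = ε := by field_simp
    linarith
  rw [hgq, hgy, ← EReal.coe_add]
  exact EReal.coe_le_coe_iff.2 hfin

/-- A lower semicontinuous `EReal`-valued function attains a minimum on a nonempty
compact set. -/
lemma lsc_min_on_compact {Q : En n → EReal} (hQ : LowerSemicontinuous Q)
    {K : Set (En n)} (hK : IsCompact K) (hne : K.Nonempty) :
    ∃ z ∈ K, ∀ w ∈ K, Q z ≤ Q w := by
  set m := sInf (Q '' K) with hm
  rcases eq_top_or_lt_top m with hmt | hmlt
  · refine ⟨hne.choose, hne.choose_spec, fun w hw => ?_⟩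
    have hwtop : Q w = ⊤ := sInf_eq_top.1 hmt (Q w) ⟨w, hw, rfl⟩
    rw [hwtop]; exact le_top
  · obtain ⟨u, hu_anti, hu_mem, hu_tendsto⟩ := exists_seq_strictAnti_tendsto' hmlt
    set S : ℕ → Set (En n) := fun k => {w ∈ K | Q w ≤ u k} with hS
    have hSne : ∀ k, (S k).Nonempty := by
      intro k
      obtain ⟨v, ⟨w, hwK, rfl⟩, hvlt⟩ := sInf_lt_iff.1 (hu_mem k).1
      exact ⟨w, hwK, hvlt.le⟩
    have hScl : ∀ k, IsClosed (S k) := by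
      intro k
      have : S k = K ∩ Q ⁻¹' (Iic (u k)) := by
        ext w; simp [hS, Set.mem_inter_iff, Set.mem_preimage]
      rw [this]
      exact hK.isClosed.inter (hQ.isClosed_preimage (u k))
    have hScpt : ∀ k, IsCompact (S k) :=
      fun k => hK.of_isClosed_subset (hScl k) (fun w hw => hw.1)
    have hdir : Directed (· ⊇ ·) S := by
      intro i j
      refine ⟨max i j, ?_, ?_⟩
      · intro w hw
        exact ⟨hw.1, hw.2.trans (hu_anti.antitone (le_max_left i j))⟩
      · intro w hw
        exact ⟨hw.1, hw.2.trans (hu_anti.antitone (le_max_right i j))⟩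
    obtain ⟨z, hz⟩ :=
      IsCompact.nonempty_iInter_of_directed_nonempty_isCompact_isClosed S hdir hSne hScpt hScl
    have hzmem : ∀ k, z ∈ S k := by
      intro k
      exact Set.mem_iInter.1 hz k
    refine ⟨z, (hzmem 0).1, fun w hw => ?_⟩
    have h1 : Q z ≤ m := by
      refine ge_of_tendsto hu_tendsto (Eventually.of_forall fun k => (hzmem k).2)
    exact h1.trans (sInf_le ⟨w, hw, rfl⟩)

end DistAux

set_option maxHeartbeats 2000000 in
/-- If `∇f + ∂g` is metrically subregular at `(x̄, 0)` with constants
`ε, κ > 0`, then `dist(x, 𝒳*) ≤ (1 + κ)(1 + L₁)‖𝒢(x)‖` for all `x` with `‖x - x̄‖ < ε`. -/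
theorem dist_le_of_metric_subregular {n : ℕ}
    (f : En n → ℝ) (f' : En n → En n) (g : En n → EReal) (prox : En n → En n)
    (L₁ : ℝ) (hL₁ : 0 < L₁)
    (hfconv : ConvexOn ℝ Set.univ f)
    (hgrad : ∀ x, HasGradientAt f (f' x) x)
    (hgradcont : Continuous f')
    (hlip : ∀ x y : En n, ‖f' x - f' y‖ ≤ L₁ * ‖x - y‖)
    (hgproper : ProperFun g) (hglsc : LowerSemicontinuous g) (hgconv : EConvexOn g)
    (hprox : IsProxMap g prox)
    (hXne : (ArgminSet f g).Nonempty)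
    (xbar : En n) (hxbar : xbar ∈ ArgminSet f g)
    (ε κ : ℝ) (hε : 0 < ε) (hκ : 0 < κ)
    (hsubreg : ∀ x : En n, ‖x - xbar‖ < ε → ∀ v ∈ ESubdiff g x,
      Metric.infDist x (ArgminSet f g) ≤ κ * ‖f' x + v‖) :
    ∀ x : En n, ‖x - xbar‖ < ε →
      Metric.infDist x (ArgminSet f g) ≤ (1 + κ) * (1 + L₁) * ‖Gmap f' prox x‖ := by
  intro x hx
  classical
  obtain ⟨y₀, hy₀⟩ := hgproper.2
  set ry₀ := (g y₀).toReal with hry₀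
  have hgy₀ : g y₀ = (ry₀ : EReal) := (EReal.coe_toReal hy₀ (hgproper.1 y₀)).symm
  -- `g xbar` is finite
  have hgxbar_ne_top : g xbar ≠ ⊤ := by
    intro htop
    have h := hxbar y₀
    rw [htop] at h
    have hL : (f xbar : EReal) + ⊤ = ⊤ := by simp
    rw [hL, hgy₀, ← EReal.coe_add] at h
    exact EReal.coe_ne_top _ (top_le_iff.1 h)
  set gb := (g xbar).toReal with hgb_def
  have hgb : g xbar = (gb : EReal) := (EReal.coe_toReal hgxbar_ne_top (hgproper.1 xbar)).symm
  -- the prox-gradient point p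
  set u := x - f' x with hu
  set p := prox u with hp
  have hppt : IsProxPt g u p := (hprox u).1
  have hminp : ∀ w, ((‖p - u‖ ^ 2 / 2 : ℝ) : EReal) + g p
      ≤ ((‖w - u‖ ^ 2 / 2 : ℝ) : EReal) + g w := by
    intro w
    have h := hppt w
    rw [add_comm (g p)] at h
    rw [add_comm (g w)] at h
    exact h
  have hexp_p : ∀ y : En n, ∀ t : ℝ, t ∈ Set.Ioo (0:ℝ) 1 →
      ‖(p + t • (y - p)) - u‖ ^ 2 / 2
        ≤ ‖p - u‖ ^ 2 / 2 + t * ⟪p - u, y - p⟫ + t ^ 2 * (‖y - p‖ ^ 2 / 2) := by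
    intro y t _
    have hrw : (p + t • (y - p)) - u = (p - u) + t • (y - p) := by abel
    rw [hrw, norm_add_sq_real, real_inner_smul_right, norm_smul, Real.norm_eq_abs, mul_pow,
      sq_abs]
    apply le_of_eq
    ring
  have hvp : u - p ∈ ESubdiff g p := by
    have h := DistAux.subgrad_of_min g hgproper hgconv (fun w => ‖w - u‖ ^ 2 / 2)
      (fun y => ‖y - p‖ ^ 2 / 2) p (p - u) hexp_p hminp
    rwa [show -(p - u) = u - p from by abel] at h
  have hgp_ne_top : g p ≠ ⊤ := by
    intro htop
    have h := hminp y₀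
    rw [htop] at h
    have hL : ((‖p - u‖ ^ 2 / 2 : ℝ) : EReal) + ⊤ = ⊤ := by simp
    rw [hL, hgy₀, ← EReal.coe_add] at h
    exact EReal.coe_ne_top _ (top_le_iff.1 h)
  set gp := (g p).toReal with hgp_def
  have hgp : g p = (gp : EReal) := (EReal.coe_toReal hgp_ne_top (hgproper.1 p)).symm
  -- the full proximal point z  (minimizer of w ↦ f w + g w + ‖w - x‖²/2)
  set s0 := ‖xbar - x‖ with hs0
  set φz : En n → ℝ := fun w => f w + ‖w - x‖ ^ 2 / 2 with hφz
  have hφc : Continuous φz := by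
    have hfc : Continuous f := by
      have hdf : Differentiable ℝ f := fun w => (hgrad w).differentiableAt
      exact hdf.continuous
    exact hfc.add (((continuous_id.sub continuous_const).norm.pow 2).div_const 2)
  have hQlsc : LowerSemicontinuous (fun w => ((φz w : ℝ) : EReal) + g w) := by
    have hcoe : LowerSemicontinuous (fun w => ((φz w : ℝ) : EReal)) :=
      (continuous_coe_real_ereal.comp hφc).lowerSemicontinuous
    exact hcoe.add' hglsc (fun w =>
      EReal.continuousAt_add (Or.inl (EReal.coe_ne_top _)) (Or.inl (EReal.coe_ne_bot _)))
  have hxbar_mem : xbar ∈ closedBall x s0 := by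
    simp [Metric.mem_closedBall, dist_eq_norm, hs0]
  obtain ⟨z, hzK, hzminK⟩ := DistAux.lsc_min_on_compact hQlsc (isCompact_closedBall x s0)
    ⟨xbar, hxbar_mem⟩
  have hzmin : ∀ w, ((φz z : ℝ) : EReal) + g z ≤ ((φz w : ℝ) : EReal) + g w := by
    intro w
    by_cases hw : w ∈ closedBall x s0
    · exact hzminK w hw
    · have h1 := hzminK xbar hxbar_mem
      have hdist : s0 < ‖w - x‖ := by
        rw [Metric.mem_closedBall, dist_eq_norm, not_le] at hw
        exact hw
      have hsplit_b : ((φz xbar : ℝ) : EReal) + g xbar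
          = ((‖xbar - x‖ ^ 2 / 2 : ℝ) : EReal) + ((f xbar : EReal) + g xbar) := by
        rw [hφz]
        rw [show ((f xbar + ‖xbar - x‖ ^ 2 / 2 : ℝ) : EReal)
          = (f xbar : EReal) + ((‖xbar - x‖ ^ 2 / 2 : ℝ) : EReal) from EReal.coe_add _ _]
        abel
      have hsplit_w : ((φz w : ℝ) : EReal) + g w
          = ((‖w - x‖ ^ 2 / 2 : ℝ) : EReal) + ((f w : EReal) + g w) := by
        rw [hφz]
        rw [show ((f w + ‖w - x‖ ^ 2 / 2 : ℝ) : EReal)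
          = (f w : EReal) + ((‖w - x‖ ^ 2 / 2 : ℝ) : EReal) from EReal.coe_add _ _]
        abel
      have h2 : ((φz xbar : ℝ) : EReal) + g xbar ≤ ((φz w : ℝ) : EReal) + g w := by
        rw [hsplit_b, hsplit_w]
        refine add_le_add ?_ (hxbar w)
        refine EReal.coe_le_coe_iff.2 ?_
        have h0 : (0:ℝ) ≤ s0 := norm_nonneg _
        nlinarith [hdist, h0]
      exact le_trans h1 h2
  have hgz_ne_top : g z ≠ ⊤ := by
    intro htop
    have h := hzmin xbar
    rw [htop] at h
    have hL : ((φz z : ℝ) : EReal) + ⊤ = ⊤ := by simp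
    rw [hL, hgb, ← EReal.coe_add] at h
    exact EReal.coe_ne_top _ (top_le_iff.1 h)
  set gz := (g z).toReal with hgz_def
  have hgz : g z = (gz : EReal) := (EReal.coe_toReal hgz_ne_top (hgproper.1 z)).symm
  -- subgradient for g at z
  have hexp_z : ∀ y : En n, ∀ t : ℝ, t ∈ Set.Ioo (0:ℝ) 1 →
      φz (z + t • (y - z))
        ≤ φz z + t * ⟪f' z + (z - x), y - z⟫ + t ^ 2 * ((L₁ + 1) / 2 * ‖y - z‖ ^ 2) := by
    intro y t _
    have hdesc := DistAux.descent f f' L₁ hgrad hlip z (z + t • (y - z))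
    have hba : (z + t • (y - z)) - z = t • (y - z) := by abel
    rw [hba, real_inner_smul_right, norm_smul, Real.norm_eq_abs, mul_pow, sq_abs] at hdesc
    have hquad : ‖(z + t • (y - z)) - x‖ ^ 2 / 2
        = ‖z - x‖ ^ 2 / 2 + t * ⟪z - x, y - z⟫ + t ^ 2 * (‖y - z‖ ^ 2 / 2) := by
      have hrw : (z + t • (y - z)) - x = (z - x) + t • (y - z) := by abel
      rw [hrw, norm_add_sq_real, real_inner_smul_right, norm_smul, Real.norm_eq_abs, mul_pow,
        sq_abs]
      ring
    have hin : ⟪f' z + (z - x), y - z⟫ = ⟪f' z, y - z⟫ + ⟪z - x, y - z⟫ := by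
      rw [inner_add_left]
    rw [hφz]
    simp only
    rw [hquad, hin]
    nlinarith [hdesc]
  have hvz : x - z - f' z ∈ ESubdiff g z := by
    have h := DistAux.subgrad_of_min g hgproper hgconv φz
      (fun y => (L₁ + 1) / 2 * ‖y - z‖ ^ 2) z (f' z + (z - x)) hexp_z hzmin
    rwa [show -(f' z + (z - x)) = x - z - f' z from by abel] at h
  -- real forms of subgradient inequalities
  have hvz_real : ∀ (y : En n) (gy : ℝ), g y = (gy : EReal) →
      gz + ⟪x - z - f' z, y - z⟫ ≤ gy := by
    intro y gy hgy
    have h := hvz y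
    rw [hgz, hgy, ← EReal.coe_add] at h
    exact EReal.coe_le_coe_iff.1 h
  have hvp_real : ∀ (y : En n) (gy : ℝ), g y = (gy : EReal) →
      gp + ⟪u - p, y - p⟫ ≤ gy := by
    intro y gy hgy
    have h := hvp y
    rw [hgp, hgy, ← EReal.coe_add] at h
    exact EReal.coe_le_coe_iff.1 h
  -- (α): ‖z - xbar‖ ≤ ‖x - xbar‖
  have hxbar_real : f xbar + gb ≤ f z + gz := by
    have h := hxbar z
    rw [hgb, hgz, ← EReal.coe_add, ← EReal.coe_add] at h
    exact EReal.coe_le_coe_iff.1 h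
  have hinner_le0 : ⟪x - z, xbar - z⟫ ≤ 0 := by
    have h1 := hvz_real xbar gb hgb
    have h2 := DistAux.grad_ineq f f' hfconv hgrad z xbar
    have h3 : ⟪x - z - f' z, xbar - z⟫ = ⟪x - z, xbar - z⟫ - ⟪f' z, xbar - z⟫ := by
      rw [inner_sub_left]
    linarith [h1, h2, h3.le, h3.ge, hxbar_real]
  have hzxbar : ‖z - xbar‖ ≤ ‖x - xbar‖ := by
    have hid : x - xbar = (x - z) - (xbar - z) := by abel
    have hsq : ‖x - xbar‖ ^ 2
        = ‖x - z‖ ^ 2 - 2 * ⟪x - z, xbar - z⟫ + ‖xbar - z‖ ^ 2 := by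
      rw [hid, norm_sub_sq_real]
    have h0 : ‖z - xbar‖ = ‖xbar - z‖ := norm_sub_rev _ _
    nlinarith [hsq, hinner_le0, norm_nonneg (x - z), norm_nonneg (xbar - z),
      norm_nonneg (x - xbar), norm_nonneg (z - xbar), h0]
  -- residual comparison : ‖x - z‖ ≤ (1 + L₁) ‖x - p‖
  have hkey1 : ‖z - p‖ ^ 2 ≤ ⟪f' x - f' z, z - p⟫ := by
    have ha := hvz_real p gp hgp
    have hb := hvp_real z gz hgz
    have hsum : ⟪x - z - f' z, p - z⟫ + ⟪u - p, z - p⟫ ≤ 0 := by linarith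
    have hflip : ⟪x - z - f' z, p - z⟫ = -⟪x - z - f' z, z - p⟫ := by
      rw [show p - z = -(z - p) from by abel, inner_neg_right]
    have hexpand : ⟪x - z - f' z, z - p⟫ - ⟪u - p, z - p⟫
        = ⟪f' x - f' z, z - p⟫ + ⟪p - z, z - p⟫ := by
      rw [← inner_sub_left, ← inner_add_left]
      congr 1
      rw [hu]; abel
    have hlast : ⟪p - z, z - p⟫ = -‖z - p‖ ^ 2 := by
      rw [show p - z = -(z - p) from by abel, inner_neg_left, real_inner_self_eq_norm_sq]
    linarith [hsum, hflip.le, hflip.ge, hexpand.le, hexpand.ge, hlast.le, hlast.ge]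
  have hcoco := DistAux.coco f f' L₁ hL₁ hfconv hgrad hlip x z
  have hsplit : ⟪f' x - f' z, x - p⟫ = ⟪f' x - f' z, x - z⟫ + ⟪f' x - f' z, z - p⟫ := by
    rw [← inner_add_right]
    congr 1
    abel
  have hCS : ⟪f' x - f' z, x - p⟫ ≤ ‖f' x - f' z‖ * ‖x - p‖ := real_inner_le_norm _ _
  have hΦbound : ‖f' x - f' z‖ ≤ L₁ * ‖x - p‖ := by
    rcases eq_or_lt_of_le (norm_nonneg (f' x - f' z)) with h0 | h0
    · rw [← h0]
      positivity
    · nlinarith [hcoco, hsplit.le, hsplit.ge, hCS, hkey1, h0, norm_nonneg (z - p)]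
  have htb : ‖z - p‖ ≤ ‖f' x - f' z‖ := by
    have hCS2 : ⟪f' x - f' z, z - p⟫ ≤ ‖f' x - f' z‖ * ‖z - p‖ := real_inner_le_norm _ _
    rcases eq_or_lt_of_le (norm_nonneg (z - p)) with h0 | h0
    · rw [← h0]
      exact norm_nonneg _
    · nlinarith [hkey1, hCS2, h0]
  have hxz : ‖x - z‖ ≤ (1 + L₁) * ‖x - p‖ := by
    have htri : ‖x - z‖ ≤ ‖x - p‖ + ‖p - z‖ := by
      rw [show x - z = (x - p) + (p - z) from by abel]
      exact norm_add_le _ _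
    have hrev : ‖p - z‖ = ‖z - p‖ := norm_sub_rev _ _
    nlinarith [htri, hrev.le, hrev.ge, htb, hΦbound]
  -- assembly
  have hzball : ‖z - xbar‖ < ε := lt_of_le_of_lt (by
    calc ‖z - xbar‖ ≤ ‖x - xbar‖ := hzxbar
      _ = ‖x - xbar‖ := rfl) hx
  have hsub := hsubreg z hzball (x - z - f' z) hvz
  have hfv : f' z + (x - z - f' z) = x - z := by abel
  rw [hfv] at hsub
  have htri2 : Metric.infDist x (ArgminSet f g)
      ≤ Metric.infDist z (ArgminSet f g) + dist x z :=
    Metric.infDist_le_infDist_add_dist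
  rw [dist_eq_norm] at htri2
  have hG : Gmap f' prox x = x - p := by
    simp only [Gmap, hp, hu]
  rw [hG]
  have hκ0 : (0:ℝ) ≤ 1 + κ := by linarith
  have hmul := mul_le_mul_of_nonneg_left hxz hκ0
  nlinarith [htri2, hsub, hmul, norm_nonneg (x - z), norm_nonneg (x - p)]
end
end

section
/- For every x ∈ ℝⁿ one has ‖𝒢(x)‖ ≤ (2 + L₁) · dist(x; 𝒳*). -/
open scoped RealInnerProductSpace
open Metric Set Filter

noncomputable section

lemma proxpt_ne_top {n : ℕ} {g : En n → EReal} (hgproper : ProperFun g)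
    {u p : En n} (hp : IsProxPt g u p) : g p ≠ ⊤ := by
  obtain ⟨y₀, hy₀⟩ := hgproper.2
  intro h
  have h1 := hp y₀
  rw [h, EReal.top_add_coe] at h1
  exact (EReal.add_lt_top hy₀ (EReal.coe_ne_top _)).ne (top_le_iff.mp h1)

/-- Subgradient inequality for prox points: `u - p ∈ ∂g(p)`. -/

lemma prox_subgrad {n : ℕ} {g : En n → EReal} (hgproper : ProperFun g) (hgconv : EConvexOn g)
    {u p : En n} (hp : IsProxPt g u p) (y : En n) (hy : g y ≠ ⊤) :
    (g p).toReal ≤ (g y).toReal + ⟪p - u, y - p⟫ := by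
  have hptop : g p ≠ ⊤ := proxpt_ne_top hgproper hp
  set gp := (g p).toReal with hgp'
  set gy := (g y).toReal with hgy'
  have hgp : g p = (gp : EReal) := (EReal.coe_toReal hptop (hgproper.1 p)).symm
  have hgy : g y = (gy : EReal) := (EReal.coe_toReal hy (hgproper.1 y)).symm
  have key : ∀ t : ℝ, 0 < t → t ≤ 1 → gp ≤ gy + ⟪p - u, y - p⟫ + t * (‖y - p‖^2/2) := by
    intro t ht ht1
    set z := p + t • (y - p) with hzdef
    have hz : (1 - t) • p + t • y = z := by rw [hzdef]; module
    have hconv := hgconv p y (1-t) t (by linarith) ht.le (by ring)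
    rw [hz, hgp, hgy] at hconv
    have hcoe : ((1-t : ℝ) : EReal) * (gp : EReal) + (t : EReal) * (gy : EReal)
        = (((1-t) * gp + t * gy : ℝ) : EReal) := by
      rw [← EReal.coe_mul, ← EReal.coe_mul, ← EReal.coe_add]
    rw [hcoe] at hconv
    have hzt : g z ≠ ⊤ := fun h => by
      rw [h, top_le_iff] at hconv; exact EReal.coe_ne_top _ hconv
    have hgz : g z = ((g z).toReal : EReal) := (EReal.coe_toReal hzt (hgproper.1 z)).symm
    set gz := (g z).toReal
    rw [hgz, EReal.coe_le_coe_iff] at hconv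
    have h1 := hp z
    rw [hgp, hgz, ← EReal.coe_add, ← EReal.coe_add, EReal.coe_le_coe_iff] at h1
    have hq : ‖z - u‖^2 = ‖p - u‖^2 + 2*t*⟪p - u, y - p⟫ + t^2*‖y - p‖^2 := by
      have hzu : z - u = (p - u) + t • (y - p) := by rw [hzdef]; abel
      rw [hzu, norm_add_sq_real, real_inner_smul_right, norm_smul]
      simp [mul_pow, sq_abs, Real.norm_eq_abs]
      ring
    have hmul : t * gp ≤ t * (gy + ⟪p - u, y - p⟫ + t * (‖y - p‖^2/2)) := by nlinarith
    exact le_of_mul_le_mul_left hmul ht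
  have hc : (0:ℝ) ≤ ‖y - p‖^2/2 := by positivity
  refine le_of_forall_pos_le_add ?_
  intro ε hε
  set c := ‖y - p‖^2/2 with hcdef
  set t := min 1 (ε / (c + 1)) with htdef
  have ht : 0 < t := lt_min one_pos (div_pos hε (by linarith))
  have h := key t ht (min_le_left _ _)
  have htc : t * c ≤ ε := by
    have h1 : t ≤ ε / (c + 1) := min_le_right _ _
    have h2 : t * c ≤ (ε / (c+1)) * c := mul_le_mul_of_nonneg_right h1 hc
    have h3 : (ε / (c+1)) * c ≤ ε := by
      rw [div_mul_eq_mul_div, div_le_iff₀ (by linarith)]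
      nlinarith
    linarith
  linarith

lemma inner_identity {n : ℕ} (p q u v : En n) :
    ⟪p - u, q - p⟫ + ⟪q - v, p - q⟫ = -‖p - q‖^2 + ⟪u - v, p - q⟫ := by
  simp only [← real_inner_self_eq_norm_sq, inner_sub_left, inner_sub_right]
  rw [real_inner_comm p q]
  ring

lemma dirDeriv {n : ℕ} (f : En n → ℝ) (fx : En n) (x d : En n)
    (h : HasGradientAt f fx x) :
    Tendsto (fun t : ℝ => (f (x + t • d) - f x) / t) (nhdsWithin 0 (Set.Ioi 0))
      (nhds ⟪fx, d⟫) := by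
  have hc : HasDerivAt (fun t : ℝ => x + t • d) d 0 := by
    simpa using ((hasDerivAt_id (0:ℝ)).smul_const d).const_add x
  have hf : HasDerivAt (fun t : ℝ => f (x + t • d)) ⟪fx, d⟫ 0 := by
    have hfd : HasFDerivAt f ((InnerProductSpace.toDual ℝ (En n)) fx) (x + (0:ℝ) • d) := by
      simpa using h.hasFDerivAt
    have := hfd.comp_hasDerivAt 0 hc
    simpa [InnerProductSpace.toDual_apply_apply, Function.comp_def] using this
  have h2 := (hasDerivAt_iff_tendsto_slope.mp hf).mono_left
    (nhdsWithin_mono 0 (fun t ht => ne_of_gt ht))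
  refine h2.congr' ?_
  filter_upwards [self_mem_nhdsWithin] with t ht
  simp [slope_def_field]

lemma prox_nonexpansive {n : ℕ} {g : En n → EReal} {prox : En n → En n}
    (hgproper : ProperFun g) (hgconv : EConvexOn g) (hprox : IsProxMap g prox)
    (u v : En n) : ‖prox u - prox v‖ ≤ ‖u - v‖ := by
  set p := prox u
  set q := prox v
  have hp := (hprox u).1
  have hq := (hprox v).1
  have hpt := proxpt_ne_top hgproper hp
  have hqt := proxpt_ne_top hgproper hq
  have h1 := prox_subgrad hgproper hgconv hp q hqt
  have h2 := prox_subgrad hgproper hgconv hq p hpt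
  have hid := inner_identity p q u v
  have hsq : ‖p - q‖^2 ≤ ⟪u - v, p - q⟫ := by linarith
  have hcs : ⟪u - v, p - q⟫ ≤ ‖u - v‖ * ‖p - q‖ := real_inner_le_norm _ _
  nlinarith [norm_nonneg (p - q), norm_nonneg (u - v)]

lemma argmin_ne_top {n : ℕ} {f : En n → ℝ} {g : En n → EReal}
    (hgproper : ProperFun g) {xs : En n} (hxs : xs ∈ ArgminSet f g) : g xs ≠ ⊤ := by
  obtain ⟨y₀, hy₀⟩ := hgproper.2
  intro h
  have h1 := hxs y₀
  rw [h, EReal.coe_add_top, top_le_iff] at h1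
  exact (EReal.add_lt_top (EReal.coe_ne_top _) hy₀).ne h1

/-- A minimizer of `f + g` is a prox point of `g` at `xs - f' xs`. -/
lemma argmin_isProxPt {n : ℕ} {f : En n → ℝ} {f' : En n → En n} {g : En n → EReal}
    (hgrad : ∀ x, HasGradientAt f (f' x) x)
    (hgproper : ProperFun g) (hgconv : EConvexOn g)
    {xs : En n} (hxs : xs ∈ ArgminSet f g) : IsProxPt g (xs - f' xs) xs := by
  have hxt : g xs ≠ ⊤ := argmin_ne_top hgproper hxs
  set gx := (g xs).toReal with hgx'
  have hgx : g xs = (gx : EReal) := (EReal.coe_toReal hxt (hgproper.1 xs)).symm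
  -- key subgradient inequality: `-f' xs ∈ ∂g(xs)`
  have key : ∀ y : En n, g y ≠ ⊤ → gx ≤ (g y).toReal + ⟪f' xs, y - xs⟫ := by
    intro y hy
    set gy := (g y).toReal with hgy'
    have hgy : g y = (gy : EReal) := (EReal.coe_toReal hy (hgproper.1 y)).symm
    set d := y - xs with hddef
    have step : ∀ t : ℝ, 0 < t → t ≤ 1 → gx - gy ≤ (f (xs + t • d) - f xs) / t := by
      intro t ht ht1
      set z := xs + t • d with hzdef
      have hz : (1 - t) • xs + t • y = z := by rw [hzdef, hddef]; module
      have hconv := hgconv xs y (1 - t) t (by linarith) ht.le (by ring)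
      rw [hz, hgx, hgy] at hconv
      have hcoe : ((1 - t : ℝ) : EReal) * (gx : EReal) + (t : EReal) * (gy : EReal)
          = (((1 - t) * gx + t * gy : ℝ) : EReal) := by
        rw [← EReal.coe_mul, ← EReal.coe_mul, ← EReal.coe_add]
      rw [hcoe] at hconv
      have hzt : g z ≠ ⊤ := fun h => by
        rw [h, top_le_iff] at hconv; exact EReal.coe_ne_top _ hconv
      have hgz : g z = ((g z).toReal : EReal) := (EReal.coe_toReal hzt (hgproper.1 z)).symm
      set gz := (g z).toReal
      rw [hgz, EReal.coe_le_coe_iff] at hconv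
      have hmin := hxs z
      rw [hgx, hgz, ← EReal.coe_add, ← EReal.coe_add, EReal.coe_le_coe_iff] at hmin
      rw [le_div_iff₀ ht]
      nlinarith
    have htend := dirDeriv f (f' xs) xs d (hgrad xs)
    have hev : ∀ᶠ t in nhdsWithin (0:ℝ) (Set.Ioi 0),
        gx - gy ≤ (f (xs + t • d) - f xs) / t := by
      filter_upwards [Ioc_mem_nhdsGT_of_mem ⟨le_refl (0:ℝ), one_pos⟩] with t ht
      exact step t ht.1 ht.2
    have := ge_of_tendsto htend hev
    linarith
  intro y
  by_cases hy : g y = ⊤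
  · rw [hy, EReal.top_add_coe]; exact le_top
  · have hk := key y hy
    have hgy : g y = ((g y).toReal : EReal) := (EReal.coe_toReal hy (hgproper.1 y)).symm
    rw [hgx, hgy, ← EReal.coe_add, ← EReal.coe_add, EReal.coe_le_coe_iff]
    have e1 : xs - (xs - f' xs) = f' xs := by abel
    have e2 : y - (xs - f' xs) = (y - xs) + f' xs := by abel
    rw [e1, e2, norm_add_sq_real]
    have hcomm : ⟪y - xs, f' xs⟫ = ⟪f' xs, y - xs⟫ := real_inner_comm _ _
    nlinarith [sq_nonneg ‖y - xs‖]

/-- For every `x`, `‖𝒢(x)‖ ≤ (2 + L₁) · dist(x, 𝒳*)`. -/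
theorem norm_Gmap_le_dist_argmin {n : ℕ}
    (f : En n → ℝ) (f' : En n → En n) (g : En n → EReal) (prox : En n → En n)
    (L₁ : ℝ) (hL₁ : 0 < L₁)
    (hfconv : ConvexOn ℝ Set.univ f)
    (hgrad : ∀ x, HasGradientAt f (f' x) x)
    (hgradcont : Continuous f')
    (hlip : ∀ x y : En n, ‖f' x - f' y‖ ≤ L₁ * ‖x - y‖)
    (hgproper : ProperFun g) (hglsc : LowerSemicontinuous g) (hgconv : EConvexOn g)
    (hprox : IsProxMap g prox)
    (hXne : (ArgminSet f g).Nonempty)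
    (x : En n) :
    ‖Gmap f' prox x‖ ≤ (2 + L₁) * Metric.infDist x (ArgminSet f g) := by
  have hpos : (0:ℝ) < 2 + L₁ := by linarith
  have hper : ∀ xs ∈ ArgminSet f g, ‖Gmap f' prox x‖ ≤ (2 + L₁) * dist x xs := by
    intro xs hxs
    have hfix : prox (xs - f' xs) = xs :=
      ((hprox (xs - f' xs)).2 xs (argmin_isProxPt hgrad hgproper hgconv hxs)).symm
    have hne : ‖prox (xs - f' xs) - prox (x - f' x)‖ ≤ ‖(xs - f' xs) - (x - f' x)‖ :=
      prox_nonexpansive hgproper hgconv hprox _ _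
    rw [hfix] at hne
    have h2 : ‖(xs - f' xs) - (x - f' x)‖ ≤ ‖xs - x‖ + ‖f' x - f' xs‖ := by
      have : (xs - f' xs) - (x - f' x) = (xs - x) + (f' x - f' xs) := by abel
      rw [this]; exact norm_add_le _ _
    have h3 : ‖f' x - f' xs‖ ≤ L₁ * ‖x - xs‖ := hlip x xs
    have h4 : ‖Gmap f' prox x‖ ≤ ‖x - xs‖ + ‖xs - prox (x - f' x)‖ := by
      have : Gmap f' prox x = (x - xs) + (xs - prox (x - f' x)) := by
        simp only [Gmap]; abel
      rw [this]; exact norm_add_le _ _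
    have h5 : ‖xs - x‖ = ‖x - xs‖ := norm_sub_rev _ _
    rw [dist_eq_norm]
    nlinarith [norm_nonneg (x - xs)]
  have h6 : ‖Gmap f' prox x‖ / (2 + L₁) ≤ Metric.infDist x (ArgminSet f g) := by
    by_contra h
    push_neg at h
    obtain ⟨y, hy, hdy⟩ := (Metric.infDist_lt_iff hXne).1 h
    rw [lt_div_iff₀ hpos] at hdy
    have := hper y hy
    nlinarith
  rw [div_le_iff₀ hpos] at h6
  linarith
end
end

section
/- Let F : ℝⁿ → (−∞,∞] be proper, lower semicontinuous, and convex, let x̄ ∈ dom F, v̄ ∈ ∂F(x̄), and q > 0. Then the following are equivalent: (i) the subgradient mapping ∂F is metrically q-subregular at (x̄, v̄), i.e., there are κ, ε > 0 with dist(x; (∂F)⁻¹(v̄)) ≤ κ · dist(v̄; ∂F(x))^q for all x with ‖x − x̄‖ < ε; (ii) there exist ε > 0 and c > 0 such that F(x) ≥ F(x̄) + ⟨v̄, x − x̄⟩ + c · dist(x; (∂F)⁻¹(v̄))^{(1+q)/q} for all x with ‖x − x̄‖ < ε. -/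
open scoped RealInnerProductSpace
open Metric Set Filter
open Topology

noncomputable section

/-- A lower semicontinuous `EReal`-valued function attains its minimum on a
nonempty compact set. -/
lemma lsc_attains_min {n : ℕ} {f : En n → EReal} (hf : LowerSemicontinuous f)
    {K : Set (En n)} (hK : IsCompact K) (hne : K.Nonempty) :
    ∃ p ∈ K, ∀ y ∈ K, f p ≤ f y := by
  set a : EReal := sInf (f '' K) with ha
  obtain ⟨u, -, hu_tend, hu_mem⟩ := exists_seq_tendsto_sInf (hne.image f) (OrderBot.bddBelow _)
  choose x hxK hxfu using fun k => (hu_mem k : u k ∈ f '' K)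
  obtain ⟨p, hpK, φ, hφmono, hφtend⟩ := hK.tendsto_subseq hxK
  refine ⟨p, hpK, fun y hy => ?_⟩
  have hfp : f p ≤ a := by
    by_contra h
    push_neg at h
    obtain ⟨b, hab, hbp⟩ := exists_between h
    have h1 : ∀ᶠ k in atTop, b < f (x (φ k)) :=
      hφtend.eventually (hf p b hbp)
    have h2 : Tendsto (fun k => f (x (φ k))) atTop (𝓝 a) := by
      have : Tendsto (fun k => u (φ k)) atTop (𝓝 a) :=
        hu_tend.comp hφmono.tendsto_atTop
      convert this using 2 with k
      exact (hxfu (φ k)).symm ▸ rfl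
    have h3 : ∀ᶠ k in atTop, f (x (φ k)) < b := h2.eventually_lt_const hab
    obtain ⟨k, hk1, hk2⟩ := (h1.and h3).exists
    exact absurd (hk1.trans hk2) (lt_irrefl _)
  exact hfp.trans (sInf_le ⟨y, hy, rfl⟩)

lemma coe_lt_add_of_lt {s r : ℝ} {A : EReal} (hA : (s : EReal) < A) {b : ℝ} (hb : r - s < b) :
    (r : EReal) < A + (b : EReal) := by
  calc (r : EReal) < ((s + b : ℝ) : EReal) := by
        exact_mod_cast by linarith
    _ = (s : EReal) + (b : EReal) := by exact_mod_cast EReal.coe_add s b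
    _ < A + (b : EReal) := EReal.add_lt_add_right_coe hA b

/-- Adding a continuous real function preserves lower semicontinuity of a
nowhere-`⊥` `EReal`-valued function. -/
lemma lsc_add_cont {n : ℕ} {F : En n → EReal} (hF : LowerSemicontinuous F)
    (hbot : ∀ y, F y ≠ ⊥) {ψ : En n → ℝ} (hψ : Continuous ψ) :
    LowerSemicontinuous fun y => F y + ((ψ y : ℝ) : EReal) := by
  intro x₀ c hc
  induction c using EReal.rec with
  | bot =>
    filter_upwards with y
    simp only [bot_lt_iff_ne_bot]
    exact fun h => hbot y (by
      rcases EReal.add_eq_bot_iff.mp h with h' | h'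
      · exact h'
      · exact absurd h' (EReal.coe_ne_bot _))
  | top => exact absurd hc (by simp)
  | coe r =>
    have hgood : ∃ s : ℝ, (s : EReal) < F x₀ ∧ r - s < ψ x₀ := by
      rcases eq_or_ne (F x₀) ⊤ with htop | htop
      · refine ⟨r - ψ x₀ + 1, ?_, by linarith⟩
        rw [htop]; exact EReal.coe_lt_top _
      · have hFr : F x₀ = ((F x₀).toReal : EReal) := (EReal.coe_toReal htop (hbot x₀)).symm
        set a := (F x₀).toReal with ha
        have hra : r - ψ x₀ < a := by
          have h : (r : EReal) < F x₀ + ((ψ x₀ : ℝ) : EReal) := hc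
          rw [hFr] at h
          have h' : (r : EReal) < ((a + ψ x₀ : ℝ) : EReal) := by
            rw [EReal.coe_add]; exact h
          have := EReal.coe_lt_coe_iff.mp h'
          linarith
        obtain ⟨s, hs1, hs2⟩ := exists_between hra
        exact ⟨s, by rw [hFr]; exact_mod_cast hs2, by linarith⟩
    obtain ⟨s, hs1, hs2⟩ := hgood
    have h1 : ∀ᶠ y in 𝓝 x₀, (s : EReal) < F y := hF x₀ s hs1
    have h2 : ∀ᶠ y in 𝓝 x₀, r - s < ψ y :=
      (hψ.continuousAt (x := x₀)).eventually_const_lt hs2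
    filter_upwards [h1, h2] with y hy1 hy2
    exact coe_lt_add_of_lt hy1 hy2

/-- A minimizer of `y ↦ F y + ‖y - u‖²/(2t) - ⟪w, y⟫` satisfies the first-order
optimality condition `w + t⁻¹ (u - p) ∈ ∂F(p)`. -/
lemma prox_subgrad_s5 {n : ℕ} {F : En n → EReal} (hconv : EConvexOn F)
    (hbot : ∀ z, F z ≠ ⊥) (u w : En n) {t : ℝ} (ht : 0 < t) {p : En n}
    {rp : ℝ} (hp : F p = (rp : EReal))
    (hmin : ∀ y, F p + ((‖p - u‖ ^ 2 / (2 * t) - ⟪w, p⟫ : ℝ) : EReal)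
              ≤ F y + ((‖y - u‖ ^ 2 / (2 * t) - ⟪w, y⟫ : ℝ) : EReal)) :
    w + t⁻¹ • (u - p) ∈ ESubdiff F p := by
  intro y
  rcases eq_or_ne (F y) ⊤ with hy | hy
  · rw [hy]; exact le_top
  set ry := (F y).toReal with hry
  have hyr : F y = (ry : EReal) := (EReal.coe_toReal hy (hbot y)).symm
  set v := w + t⁻¹ • (u - p) with hv
  set A := (⟪p - u, y - p⟫ : ℝ) with hA
  set B := ‖y - p‖ ^ 2 with hB
  set W := (⟪w, y - p⟫ : ℝ) with hW
  have hBnn : 0 ≤ B := by positivity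
  have hvinner : (⟪v, y - p⟫ : ℝ) = W - t⁻¹ * A := by
    rw [hv, inner_add_left, real_inner_smul_left]
    have : (⟪u - p, y - p⟫ : ℝ) = -A := by
      rw [hA, ← inner_neg_left, neg_sub]
    rw [this]; ring
  have key : ∀ θ : ℝ, 0 < θ → θ ≤ 1 →
      rp + (W - t⁻¹ * A) ≤ ry + θ * (B / (2 * t)) := by
    intro θ hθ hθ1
    set yθ := p + θ • (y - p) with hyθ
    have heq : yθ = (1 - θ) • p + θ • y := by
      rw [hyθ]; module
    have h1 : F yθ ≤ (((1 - θ) * rp + θ * ry : ℝ) : EReal) := by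
      have h := hconv p y (1 - θ) θ (by linarith) hθ.le (by ring)
      rw [← heq, hp, hyr] at h
      refine h.trans_eq ?_
      norm_cast
    have h2 := hmin yθ
    have h3 : F yθ + ((‖yθ - u‖ ^ 2 / (2 * t) - ⟪w, yθ⟫ : ℝ) : EReal)
        ≤ ((((1 - θ) * rp + θ * ry) + (‖yθ - u‖ ^ 2 / (2 * t) - ⟪w, yθ⟫) : ℝ) : EReal) := by
      rw [EReal.coe_add]
      exact add_le_add h1 le_rfl
    have hreal : rp + (‖p - u‖ ^ 2 / (2 * t) - ⟪w, p⟫)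
        ≤ ((1 - θ) * rp + θ * ry) + (‖yθ - u‖ ^ 2 / (2 * t) - ⟪w, yθ⟫) := by
      have := (h2.trans h3)
      rw [hp, ← EReal.coe_add] at this
      exact_mod_cast this
    have hnorm : ‖yθ - u‖ ^ 2 = ‖p - u‖ ^ 2 + 2 * θ * A + θ ^ 2 * B := by
      have hdiff : yθ - u = (p - u) + θ • (y - p) := by
        rw [hyθ]; module
      rw [hdiff, norm_add_sq_real, real_inner_smul_right, norm_smul, mul_pow]
      rw [Real.norm_eq_abs, sq_abs]
      ring
    have hinnw : (⟪w, yθ⟫ : ℝ) = ⟪w, p⟫ + θ * W := by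
      rw [hyθ, inner_add_right, real_inner_smul_right, hW]
    have expand : (‖p - u‖ ^ 2 + 2 * θ * A + θ ^ 2 * B) / (2 * t)
        = ‖p - u‖ ^ 2 / (2 * t) + θ * (A / t) + θ ^ 2 * (B / (2 * t)) := by
      field_simp
    rw [hnorm, hinnw, expand] at hreal
    have hfact : θ * (rp - ry - A / t - θ * (B / (2 * t)) + W) ≤ 0 := by nlinarith [hreal]
    have hred : rp - ry - A / t - θ * (B / (2 * t)) + W ≤ 0 := by nlinarith [hfact, hθ]
    have hAt : t⁻¹ * A = A / t := by rw [inv_mul_eq_div]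
    rw [hAt]
    linarith [hred]
  have hfinal : rp + (W - t⁻¹ * A) ≤ ry := by
    apply le_of_forall_pos_le_add
    intro ε hε
    set C := B / (2 * t) with hC
    have hCnn : 0 ≤ C := by positivity
    have hθpos : 0 < min 1 (ε / (C + 1)) := by
      apply lt_min one_pos; positivity
    have := key (min 1 (ε / (C + 1))) hθpos (min_le_left _ _)
    have hmul : min 1 (ε / (C + 1)) * C ≤ ε := by
      have h1 : min 1 (ε / (C + 1)) ≤ ε / (C + 1) := min_le_right _ _
      have h2 : min 1 (ε / (C + 1)) * C ≤ (ε / (C + 1)) * C :=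
        mul_le_mul_of_nonneg_right h1 hCnn
      have h3 : (ε / (C + 1)) * C ≤ ε := by
        rw [div_mul_eq_mul_div, div_le_iff₀ (by positivity)]
        nlinarith
      linarith
    linarith
  rw [hp, hyr, hvinner, ← EReal.coe_add, EReal.coe_le_coe_iff]
  exact hfinal

set_option maxHeartbeats 2000000 in
/-- For a proper l.s.c. convex `F`, `x̄ ∈ dom F`, `v̄ ∈ ∂F(x̄)` and `q > 0`,
metric `q`-subregularity of `∂F` at `(x̄, v̄)` is equivalent to the growth condition
`F(x) ≥ F(x̄) + ⟨v̄, x - x̄⟩ + c · dist(x, (∂F)⁻¹(v̄))^{(1+q)/q}` near `x̄`. -/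
theorem metric_q_subregular_iff_growth {n : ℕ}
    (F : En n → EReal)
    (hFproper : ProperFun F) (hFlsc : LowerSemicontinuous F) (hFconv : EConvexOn F)
    (xbar : En n) (hdom : F xbar ≠ ⊤)
    (vbar : En n) (hvbar : vbar ∈ ESubdiff F xbar)
    (q : ℝ) (hq : 0 < q) :
    (∃ κ > (0 : ℝ), ∃ ε > (0 : ℝ), ∀ x : En n, ‖x - xbar‖ < ε →
        ∀ v ∈ ESubdiff F x,
          Metric.infDist x {z : En n | vbar ∈ ESubdiff F z} ≤ κ * ‖vbar - v‖ ^ q) ↔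
    (∃ ε > (0 : ℝ), ∃ c > (0 : ℝ), ∀ x : En n, ‖x - xbar‖ < ε →
        F xbar + ((⟪vbar, x - xbar⟫ +
          c * Metric.infDist x {z : En n | vbar ∈ ESubdiff F z} ^ ((1 + q) / q) : ℝ) : EReal)
          ≤ F x) := by
  obtain ⟨hbot, -⟩ := hFproper
  set S := {z : En n | vbar ∈ ESubdiff F z} with hSdef
  have hxbarS : xbar ∈ S := hvbar
  have hSne : S.Nonempty := ⟨xbar, hxbarS⟩
  set m := (F xbar).toReal with hmdef
  have hm : F xbar = (m : EReal) := (EReal.coe_toReal hdom (hbot xbar)).symm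
  have hlow : ∀ y, ((m + ⟪vbar, y - xbar⟫ : ℝ) : EReal) ≤ F y := by
    intro y
    have h := hvbar y
    rw [hm, ← EReal.coe_add] at h
    exact h
  have hSval : ∀ z ∈ S, F z = ((m + ⟪vbar, z - xbar⟫ : ℝ) : EReal) := by
    intro z hz
    have hub := hz xbar
    have hne_top : F z ≠ ⊤ := by
      intro h
      rw [h, EReal.top_add_coe, hm] at hub
      exact EReal.coe_ne_top m (top_le_iff.mp hub)
    have hz' : F z = ((F z).toReal : EReal) := (EReal.coe_toReal hne_top (hbot z)).symm
    set rz := (F z).toReal with hrz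
    rw [hz', hm, ← EReal.coe_add, EReal.coe_le_coe_iff] at hub
    have hlo := hlow z
    rw [hz', EReal.coe_le_coe_iff] at hlo
    have hinn : (⟪vbar, xbar - z⟫ : ℝ) = -⟪vbar, z - xbar⟫ := by
      rw [← inner_neg_right, neg_sub]
    rw [hz']
    congr 1
    rw [hinn] at hub
    linarith
  constructor
  · -- metric q-subregularity ⇒ growth
    rintro ⟨κ, hκ, ε, hε, hsub⟩
    set K0 := 2 * (4 : ℝ) ^ q * κ with hK0
    have h4q : (0 : ℝ) < (4 : ℝ) ^ q := Real.rpow_pos_of_pos (by norm_num) q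
    have hK0pos : 0 < K0 := by positivity
    refine ⟨ε / 2, by positivity, (1 / K0) ^ (1 / q), by positivity, ?_⟩
    intro x hx
    rcases eq_or_ne (F x) ⊤ with hFx | hFx
    · rw [hFx]; exact le_top
    have hr : F x = ((F x).toReal : EReal) := (EReal.coe_toReal hFx (hbot x)).symm
    set r := (F x).toReal with hrdef
    set d := infDist x S with hd
    have hd0 : 0 ≤ d := infDist_nonneg
    set Δ := r - m - ⟪vbar, x - xbar⟫ with hΔ
    have hΔ0 : 0 ≤ Δ := by
      have := hlow x
      rw [hr, EReal.coe_le_coe_iff] at this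
      rw [hΔ]; linarith
    rw [hm, hr, ← EReal.coe_add, EReal.coe_le_coe_iff]
    suffices hsuff : (1 / K0) ^ (1 / q) * d ^ ((1 + q) / q) ≤ Δ by
      rw [hΔ] at hsuff; linarith
    rcases eq_or_lt_of_le hd0 with hdz | hdpos
    · rw [← hdz, Real.zero_rpow (by positivity : (1 + q) / q ≠ 0)]
      rw [mul_zero]; exact hΔ0
    rcases eq_or_lt_of_le hΔ0 with hΔz | hΔpos
    · exfalso
      have hxS : x ∈ S := by
        intro y
        have hx_val : r = m + ⟪vbar, x - xbar⟫ := by rw [hΔ] at hΔz; linarith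
        rw [hr, ← EReal.coe_add]
        refine le_trans ?_ (hlow y)
        rw [EReal.coe_le_coe_iff]
        have hadd : (⟪vbar, x - xbar⟫ : ℝ) + ⟪vbar, y - x⟫ = ⟪vbar, y - xbar⟫ := by
          rw [← inner_add_right]; congr 1; abel
        rw [hx_val]; linarith
      have : d = 0 := by rw [hd]; exact infDist_zero_of_mem hxS
      linarith
    -- main case : d > 0, Δ > 0
    set t := d ^ 2 / (8 * Δ) with ht
    have htpos : 0 < t := by positivity
    have h2tΔ : 2 * t * Δ = d ^ 2 / 4 := by rw [ht]; field_simp; ring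
    have hψcont : Continuous fun y : En n => ‖y - x‖ ^ 2 / (2 * t) - ⟪vbar, y⟫ := by
      apply Continuous.sub
      · exact (((continuous_id.sub continuous_const).norm.pow 2).div_const (2 * t))
      · exact continuous_const.inner continuous_id
    have hΦlsc := lsc_add_cont hFlsc hbot hψcont
    obtain ⟨p, hpball, hpmin_ball⟩ := lsc_attains_min hΦlsc
      (isCompact_closedBall x (d / 2)) ⟨x, mem_closedBall_self (by positivity)⟩
    have hψx : ‖x - x‖ ^ 2 / (2 * t) - (⟪vbar, x⟫ : ℝ) = -⟪vbar, x⟫ := by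
      simp [sub_self]
    have hΦglobal : ∀ y, F p + ((‖p - x‖ ^ 2 / (2 * t) - ⟪vbar, p⟫ : ℝ) : EReal)
        ≤ F y + ((‖y - x‖ ^ 2 / (2 * t) - ⟪vbar, y⟫ : ℝ) : EReal) := by
      intro y
      by_cases hyball : y ∈ closedBall x (d / 2)
      · exact hpmin_ball y hyball
      · have h1 := hpmin_ball x (mem_closedBall_self (by positivity))
        refine h1.trans ?_
        have hyx : d / 2 < ‖y - x‖ := by
          rw [mem_closedBall, dist_eq_norm] at hyball
          linarith [not_le.mp hyball]
        have hrhs : ((m + ⟪vbar, y - xbar⟫ + (‖y - x‖ ^ 2 / (2 * t) - ⟪vbar, y⟫) : ℝ) : EReal)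
            ≤ F y + ((‖y - x‖ ^ 2 / (2 * t) - ⟪vbar, y⟫ : ℝ) : EReal) := by
          rw [EReal.coe_add]
          exact add_le_add (hlow y) le_rfl
        refine le_trans ?_ hrhs
        rw [hr, ← EReal.coe_add, EReal.coe_le_coe_iff]
        have hinn1 : (⟪vbar, y - xbar⟫ : ℝ) = ⟪vbar, y⟫ - ⟪vbar, xbar⟫ := inner_sub_right _ _ _
        have hinn2 : (⟪vbar, x - xbar⟫ : ℝ) = ⟪vbar, x⟫ - ⟪vbar, xbar⟫ := inner_sub_right _ _ _
        have hΔlt : Δ < ‖y - x‖ ^ 2 / (2 * t) := by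
          rw [lt_div_iff₀ (by positivity)]
          nlinarith
        rw [hψx]
        rw [hΔ, hinn2] at hΔlt
        linarith
    have hΦpx := hΦglobal x
    have hFp_ne_top : F p ≠ ⊤ := by
      intro h
      rw [h, EReal.top_add_coe, hr, ← EReal.coe_add] at hΦpx
      exact EReal.coe_ne_top _ (top_le_iff.mp hΦpx)
    have hrp : F p = ((F p).toReal : EReal) := (EReal.coe_toReal hFp_ne_top (hbot p)).symm
    set rp := (F p).toReal with hrpdef
    have hv : vbar + t⁻¹ • (x - p) ∈ ESubdiff F p :=
      prox_subgrad_s5 hFconv hbot x vbar htpos hrp hΦglobal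
    set v := vbar + t⁻¹ • (x - p) with hvdef
    -- ‖p - x‖ ≤ d / 2
    have hreal_px : rp + (‖p - x‖ ^ 2 / (2 * t) - ⟪vbar, p⟫)
        ≤ r + (‖x - x‖ ^ 2 / (2 * t) - ⟪vbar, x⟫) := by
      have := hΦpx
      rw [hrp, hr, ← EReal.coe_add, ← EReal.coe_add, EReal.coe_le_coe_iff] at this
      exact this
    rw [hψx] at hreal_px
    have hlowp : m + ⟪vbar, p - xbar⟫ ≤ rp := by
      have := hlow p
      rw [hrp, EReal.coe_le_coe_iff] at this
      exact this
    have hinnp : (⟪vbar, p - xbar⟫ : ℝ) = ⟪vbar, p⟫ - ⟪vbar, xbar⟫ := inner_sub_right _ _ _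
    have hinnx : (⟪vbar, x - xbar⟫ : ℝ) = ⟪vbar, x⟫ - ⟪vbar, xbar⟫ := inner_sub_right _ _ _
    have hpx_sq : ‖p - x‖ ^ 2 ≤ 2 * t * Δ := by
      have h2t : (0 : ℝ) < 2 * t := by positivity
      have hdiv : ‖p - x‖ ^ 2 / (2 * t) ≤ Δ := by
        rw [hΔ, hinnx]; linarith
      rw [div_le_iff₀ h2t] at hdiv
      linarith
    have hpx : ‖p - x‖ ≤ d / 2 := by
      nlinarith [norm_nonneg (p - x), hpx_sq, h2tΔ, hd0]
    have hpxbar : ‖p - xbar‖ < ε := by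
      have htr : ‖p - xbar‖ ≤ ‖p - x‖ + ‖x - xbar‖ := by
        have h := dist_triangle p x xbar
        rw [dist_eq_norm, dist_eq_norm, dist_eq_norm] at h
        exact h
      have hdle : d ≤ ‖x - xbar‖ := by
        rw [hd]
        have h := infDist_le_dist_of_mem (x := x) hxbarS
        rwa [dist_eq_norm] at h
      linarith
    have hsubp := hsub p hpxbar v hv
    have hnv : ‖vbar - v‖ = ‖x - p‖ / t := by
      have hveq : vbar - v = -(t⁻¹ • (x - p)) := by
        rw [hvdef]; module
      rw [hveq, norm_neg, norm_smul, Real.norm_eq_abs, abs_of_pos (inv_pos.mpr htpos),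
        inv_mul_eq_div]
    rw [hnv] at hsubp
    have h3xp : ‖x - p‖ ≤ d / 2 := by rw [norm_sub_rev]; exact hpx
    have hdchain : d ≤ κ * (‖x - p‖ / t) ^ q + d / 2 := by
      have h1 : infDist x S ≤ infDist p S + dist x p := infDist_le_infDist_add_dist
      have h2 : dist x p = ‖x - p‖ := dist_eq_norm x p
      rw [h2] at h1
      rw [← hd] at h1
      linarith [hsubp]
    have hmono : (‖x - p‖ / t) ^ q ≤ (d / 2 / t) ^ q := by
      apply Real.rpow_le_rpow (by positivity) _ hq.le
      gcongr
    have hchain2 : d / 2 ≤ κ * (d / 2 / t) ^ q := by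
      have := mul_le_mul_of_nonneg_left hmono hκ.le
      linarith [hdchain]
    have hval : d / 2 / t = 4 * Δ / d := by
      rw [ht]; field_simp; ring
    rw [hval] at hchain2
    have hrp4 : (4 * Δ / d) ^ q = 4 ^ q * Δ ^ q / d ^ q := by
      rw [Real.div_rpow (by positivity) hd0, Real.mul_rpow (by norm_num) hΔpos.le]
    rw [hrp4] at hchain2
    have hdq : (0 : ℝ) < d ^ q := Real.rpow_pos_of_pos hdpos q
    have hstep : d * d ^ q ≤ K0 * Δ ^ q := by
      have h5 := mul_le_mul_of_nonneg_right hchain2 hdq.le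
      have h6 : (κ * (4 ^ q * Δ ^ q / d ^ q)) * d ^ q = κ * (4 ^ q * Δ ^ q) := by
        field_simp
      rw [h6] at h5
      rw [hK0]
      nlinarith [h5]
    have h7 : d ^ (1 + q) ≤ K0 * Δ ^ q := by
      rw [Real.rpow_add hdpos, Real.rpow_one]
      exact hstep
    have h8 : d ^ ((1 + q) / q) ≤ (K0 * Δ ^ q) ^ (1 / q) := by
      rw [show (1 + q) / q = (1 + q) * (1 / q) by rw [mul_one_div]]
      rw [Real.rpow_mul hd0]
      exact Real.rpow_le_rpow (Real.rpow_nonneg hd0 _) h7 (by positivity)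
    have h9 : (K0 * Δ ^ q) ^ (1 / q) = K0 ^ (1 / q) * Δ := by
      rw [Real.mul_rpow hK0pos.le (Real.rpow_nonneg hΔ0 q)]
      congr 1
      rw [← Real.rpow_mul hΔ0, mul_one_div_cancel hq.ne', Real.rpow_one]
    rw [h9] at h8
    have hc1 : (1 / K0) ^ (1 / q) * K0 ^ (1 / q) = 1 := by
      rw [← Real.mul_rpow (by positivity) hK0pos.le, one_div_mul_cancel hK0pos.ne',
        Real.one_rpow]
    calc (1 / K0) ^ (1 / q) * d ^ ((1 + q) / q)
        ≤ (1 / K0) ^ (1 / q) * (K0 ^ (1 / q) * Δ) := by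
          exact mul_le_mul_of_nonneg_left h8 (by positivity)
      _ = ((1 / K0) ^ (1 / q) * K0 ^ (1 / q)) * Δ := by ring
      _ = Δ := by rw [hc1, one_mul]
  · -- growth ⇒ metric q-subregularity
    rintro ⟨ε, hε, c, hc, hgrow⟩
    refine ⟨(1 / c) ^ q, by positivity, ε, hε, ?_⟩
    intro x hx v hv
    set d := infDist x S with hd
    have hd0 : 0 ≤ d := infDist_nonneg
    rcases eq_or_lt_of_le hd0 with hdz | hdpos
    · rw [← hdz]; positivity
    have hFx : F x ≠ ⊤ := by
      intro h
      have := hv xbar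
      rw [h, EReal.top_add_coe, hm] at this
      exact EReal.coe_ne_top m (top_le_iff.mp this)
    have hr : F x = ((F x).toReal : EReal) := (EReal.coe_toReal hFx (hbot x)).symm
    set r := (F x).toReal with hrdef
    have hgr := hgrow x hx
    rw [hm, hr, ← EReal.coe_add, EReal.coe_le_coe_iff] at hgr
    set N := ‖vbar - v‖ with hN
    have hNnn : 0 ≤ N := norm_nonneg _
    have key : c * d ^ ((1 + q) / q) ≤ N * d := by
      apply le_of_forall_pos_le_add
      intro δ hδ
      set δ' := δ / (N + 1) with hδ'
      have hδ'pos : 0 < δ' := by positivity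
      obtain ⟨wpt, hwS, hwdist⟩ := (infDist_lt_iff hSne).mp
        (by rw [← hd]; linarith : infDist x S < d + δ')
      rw [dist_eq_norm] at hwdist
      have hvw := hv wpt
      rw [hr, hSval wpt hwS, ← EReal.coe_add, EReal.coe_le_coe_iff] at hvw
      have e1 : (⟪vbar, wpt - xbar⟫ : ℝ) - ⟪vbar, x - xbar⟫ = ⟪vbar, wpt - x⟫ := by
        rw [← inner_sub_right]; congr 1; abel
      have e2 : (⟪vbar, wpt - x⟫ : ℝ) - ⟪v, wpt - x⟫ = ⟪vbar - v, wpt - x⟫ := by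
        rw [← inner_sub_left]
      have e3 : (⟪vbar - v, wpt - x⟫ : ℝ) ≤ N * ‖wpt - x‖ := by
        rw [hN]; exact real_inner_le_norm _ _
      have e4 : ‖wpt - x‖ = ‖x - wpt‖ := norm_sub_rev _ _
      have e5 : N * ‖wpt - x‖ ≤ N * (d + δ') := by
        apply mul_le_mul_of_nonneg_left _ hNnn
        rw [e4]; linarith
      have e6 : N * δ' ≤ δ := by
        rw [hδ', mul_div_assoc']
        rw [div_le_iff₀ (by positivity)]
        nlinarith
      nlinarith [hgr, hvw, e1, e2, e3, e5, e6]
    -- now conclude d ≤ (1/c)^q * N^q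
    have hp1 : (1 + q) / q = 1 / q + 1 := by field_simp
    have hkey2 : c * d ^ (1 / q) ≤ N := by
      have hrw : d ^ ((1 + q) / q) = d ^ (1 / q) * d := by
        rw [hp1, Real.rpow_add hdpos, Real.rpow_one]
      rw [hrw] at key
      have := le_of_mul_le_mul_right (by linarith [key] : (c * d ^ (1 / q)) * d ≤ N * d) hdpos
      exact this
    have hdq : d ^ (1 / q) ≤ N / c := by
      rw [le_div_iff₀ hc]; linarith [hkey2]
    have hfin : d ≤ (N / c) ^ q := by
      have h1 : (d ^ (1 / q)) ^ q ≤ (N / c) ^ q :=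
        Real.rpow_le_rpow (Real.rpow_nonneg hd0 _) hdq hq.le
      rwa [← Real.rpow_mul hd0, one_div_mul_cancel hq.ne', Real.rpow_one] at h1
    have hNc : (N / c) ^ q = (1 / c) ^ q * N ^ q := by
      rw [div_eq_mul_inv, ← one_div, mul_comm N (1 / c), Real.mul_rpow (by positivity) hNnn]
    rw [hNc] at hfin
    exact hfin

end
end

section
/- Let x̄ ∈ 𝒳* and q > 0. If ∂g is strongly metrically q-subregular at (x̄, −∇f(x̄)), i.e., there exist κ, ε > 0 with ‖x − x̄‖ ≤ κ · dist(−∇f(x̄); ∂g(x))^q for all x with ‖x − x̄‖ < ε, then the mapping x ↦ ∇f(x) + ∂g(x) is metrically q-subregular at (x̄, 0), i.e., there exist κ', ε' > 0 with dist(x; 𝒳*) ≤ κ' · dist(0; ∇f(x) + ∂g(x))^q for all x with ‖x − x̄‖ < ε'. -/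
open scoped RealInnerProductSpace
open Metric Set Filter

noncomputable section

section AuxLemmasForStatement6
open Topology

/-- A lower semicontinuous `EReal`-valued function attains its minimum on a nonempty
compact set. -/
theorem lsc_exists_min {X : Type*} [TopologicalSpace X] [T2Space X] {K : Set X}
    (hK : IsCompact K) (hne : K.Nonempty) {Φ : X → EReal} (hΦ : LowerSemicontinuous Φ) :
    ∃ p ∈ K, ∀ z ∈ K, Φ p ≤ Φ z := by
  set m := sInf (Φ '' K) with hm
  by_cases htop : m = ⊤
  · obtain ⟨p, hp⟩ := hne
    refine ⟨p, hp, fun z hz => ?_⟩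
    have : Φ z = ⊤ := top_le_iff.mp (htop ▸ sInf_le ⟨z, hz, rfl⟩)
    simp [this]
  · have hmlt : m < ⊤ := lt_top_iff_ne_top.mpr htop
    set ι := {t : EReal // m < t}
    haveI : Nonempty ι := ⟨⟨⊤, hmlt⟩⟩
    set Z : ι → Set X := fun t => K ∩ Φ ⁻¹' (Iic t.1) with hZ
    have hZne : ∀ t : ι, (Z t).Nonempty := by
      intro t
      obtain ⟨a, ⟨z, hz, rfl⟩, ha⟩ := sInf_lt_iff.mp t.2
      exact ⟨z, hz, le_of_lt ha⟩
    have hZcl : ∀ t : ι, IsClosed (Z t) :=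
      fun t => hK.isClosed.inter (hΦ.isClosed_preimage t.1)
    have hZcp : ∀ t : ι, IsCompact (Z t) :=
      fun t => hK.inter_right (hΦ.isClosed_preimage t.1)
    have hdir : Directed (· ⊇ ·) Z := by
      intro t s
      refine ⟨⟨min t.1 s.1, lt_min t.2 s.2⟩, ?_, ?_⟩
      · intro z hz
        simp only [Z, mem_inter_iff, mem_preimage, mem_Iic] at hz ⊢
        exact ⟨hz.1, le_trans hz.2 (min_le_left _ _)⟩
      · intro z hz
        simp only [Z, mem_inter_iff, mem_preimage, mem_Iic] at hz ⊢
        exact ⟨hz.1, le_trans hz.2 (min_le_right _ _)⟩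
    obtain ⟨p, hp⟩ := IsCompact.nonempty_iInter_of_directed_nonempty_isCompact_isClosed
      Z hdir hZne hZcp hZcl
    have hpK : p ∈ K := by
      obtain ⟨t⟩ := ‹Nonempty ι›
      exact (mem_iInter.mp hp t).1
    refine ⟨p, hpK, fun z hz => ?_⟩
    have hpm : Φ p ≤ m := by
      refine le_of_forall_gt_imp_ge_of_dense fun t ht => ?_
      exact (mem_iInter.mp hp ⟨t, ht⟩).2
    exact le_trans hpm (sInf_le ⟨z, hz, rfl⟩)

/-- Gradient inequality for a convex differentiable function. -/
theorem grad_ineq {n : ℕ} {f : En n → ℝ} (hf : ConvexOn ℝ Set.univ f)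
    {u x : En n} (hx : HasGradientAt f u x) (y : En n) :
    f x + ⟪u, y - x⟫ ≤ f y := by
  set d := y - x with hd
  have hline : HasDerivAt (fun s : ℝ => x + s • d) d 0 := by
    simpa using ((hasDerivAt_id (0:ℝ)).smul_const d).const_add x
  have hF : HasFDerivAt f (InnerProductSpace.toDual ℝ (En n) u) (x + (0:ℝ) • d) := by
    simpa using hasGradientAt_iff_hasFDerivAt.mp hx
  have hφ : HasDerivAt (fun s : ℝ => f (x + s • d)) ⟪u, d⟫ 0 := by
    have h := hF.comp_hasDerivAt 0 hline
    simp only [InnerProductSpace.toDual_apply_apply] at h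
    exact h
  have hslope : Tendsto (slope (fun s : ℝ => f (x + s • d)) 0) (𝓝[>] 0) (𝓝 ⟪u, d⟫) :=
    (hasDerivAt_iff_tendsto_slope.mp hφ).mono_left
      (nhdsWithin_mono 0 (fun s hs => ne_of_gt hs))
  have hev : ∀ᶠ s in 𝓝[>] (0:ℝ), slope (fun s : ℝ => f (x + s • d)) 0 s ≤ f y - f x := by
    filter_upwards [Ioc_mem_nhdsGT_of_mem (by norm_num : (0:ℝ) ∈ Ico (0:ℝ) 1)] with s hs
    obtain ⟨hs0, hs1⟩ := hs
    have hcomb : f (x + s • d) ≤ (1 - s) * f x + s * f y := by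
      have h := hf.2 (mem_univ x) (mem_univ y) (by linarith : (0:ℝ) ≤ 1 - s)
        (le_of_lt hs0) (by ring)
      have hxy : (1 - s) • x + s • y = x + s • d := by
        rw [hd]; module
      rwa [hxy] at h
    have h0 : f (x + (0:ℝ) • d) = f x := by norm_num
    rw [slope_def_field, h0, sub_zero, div_le_iff₀ hs0]
    nlinarith
  have := le_of_tendsto hslope hev
  linarith [this]

theorem argmin_g_ne_top {n : ℕ} {f : En n → ℝ} {g : En n → EReal}
    (hgproper : ProperFun g) {xbar : En n} (hxbar : xbar ∈ ArgminSet f g) :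
    g xbar ≠ ⊤ := by
  obtain ⟨y₀, hy₀⟩ := hgproper.2
  intro contra
  have h := hxbar y₀
  rw [contra] at h
  have h1 : ((f xbar : EReal) + ⊤) = ⊤ := by
    simp [EReal.add_top_of_ne_bot]
  rw [h1, top_le_iff] at h
  exact (EReal.add_lt_top (by simp) hy₀).ne h

theorem neg_grad_mem_subdiff {n : ℕ} {f : En n → ℝ} {f' : En n → En n} {g : En n → EReal}
    (hfconv : ConvexOn ℝ Set.univ f) (hgrad : ∀ x, HasGradientAt f (f' x) x)
    (hgradcont : Continuous f') (hgproper : ProperFun g) (hgconv : EConvexOn g)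
    {xbar : En n} (hxbar : xbar ∈ ArgminSet f g) :
    -f' xbar ∈ ESubdiff g xbar := by
  intro y
  by_cases hy : g y = ⊤
  · simp [hy]
  have hxt : g xbar ≠ ⊤ := argmin_g_ne_top hgproper hxbar
  obtain ⟨a, ha⟩ : ∃ a : ℝ, g xbar = (a : EReal) :=
    ⟨(g xbar).toReal, (EReal.coe_toReal hxt (hgproper.1 xbar)).symm⟩
  obtain ⟨b, hb⟩ : ∃ b : ℝ, g y = (b : EReal) :=
    ⟨(g y).toReal, (EReal.coe_toReal hy (hgproper.1 y)).symm⟩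
  rw [ha, hb, ← EReal.coe_add, EReal.coe_le_coe_iff]
  have key : ∀ s : ℝ, s ∈ Ioc (0:ℝ) 1 →
      a - b ≤ ⟪f' (xbar + s • (y - xbar)), y - xbar⟫ := by
    rintro s ⟨hs0, hs1⟩
    set xs := xbar + s • (y - xbar) with hxsdef
    have hxseq : (1 - s) • xbar + s • y = xs := by rw [hxsdef]; module
    have hconv := hgconv xbar y (1 - s) s (by linarith) hs0.le (by ring)
    rw [hxseq, ha, hb] at hconv
    have h2 : g xs ≤ (((1 - s) * a + s * b : ℝ) : EReal) := by
      rw [← EReal.coe_mul, ← EReal.coe_mul, ← EReal.coe_add] at hconv; exact hconv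
    have h3 : ((f xbar + a : ℝ) : EReal) ≤ ((f xs + ((1 - s) * a + s * b) : ℝ) : EReal) := by
      have h4 := (hxbar xs).trans (add_le_add_right h2 (f xs : EReal))
      rw [ha] at h4
      simpa [← EReal.coe_add] using h4
    rw [EReal.coe_le_coe_iff] at h3
    have h5 : f xs + ⟪f' xs, xbar - xs⟫ ≤ f xbar := grad_ineq hfconv (hgrad xs) xbar
    have h6 : ⟪f' xs, xbar - xs⟫ = -(s * ⟪f' xs, y - xbar⟫) := by
      have : xbar - xs = -(s • (y - xbar)) := by rw [hxsdef]; abel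
      rw [this, inner_neg_right, real_inner_smul_right]
    rw [h6] at h5
    have : s * (a - b) ≤ s * ⟪f' xs, y - xbar⟫ := by linarith
    exact le_of_mul_le_mul_left (by linarith) hs0
  have hcont : Tendsto (fun s : ℝ => ⟪f' (xbar + s • (y - xbar)), y - xbar⟫)
      (𝓝[>] 0) (𝓝 ⟪f' xbar, y - xbar⟫) := by
    have hc : Continuous fun s : ℝ => ⟪f' (xbar + s • (y - xbar)), y - xbar⟫ := by
      apply Continuous.inner
      · exact hgradcont.comp (by continuity)
      · exact continuous_const
    have := hc.tendsto 0
    simp only [zero_smul, add_zero] at this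
    exact this.mono_left nhdsWithin_le_nhds
  have hev : ∀ᶠ s in 𝓝[>] (0:ℝ), a - b ≤ ⟪f' (xbar + s • (y - xbar)), y - xbar⟫ := by
    filter_upwards [Ioc_mem_nhdsGT_of_mem (by norm_num : (0:ℝ) ∈ Ico (0:ℝ) 1)] with s hs
    exact key s hs
  have hfin := ge_of_tendsto hcont hev
  have : ⟪-f' xbar, y - xbar⟫ = -⟪f' xbar, y - xbar⟫ := inner_neg_left _ _
  rw [this]
  linarith

theorem subdiff_g_ne_top {n : ℕ} {g : En n → EReal} (hgproper : ProperFun g)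
    {x v : En n} (hv : v ∈ ESubdiff g x) : g x ≠ ⊤ := by
  intro contra
  obtain ⟨y₀, hy₀⟩ := hgproper.2
  have h := hv y₀
  rw [contra, EReal.top_add_coe, top_le_iff] at h
  exact hy₀ h


theorem prox_step {n : ℕ} {f : En n → ℝ} {f' : En n → En n} {g : En n → EReal}
    (hfconv : ConvexOn ℝ Set.univ f) (hgrad : ∀ x, HasGradientAt f (f' x) x)
    (hgradcont : Continuous f') (hgproper : ProperFun g)
    (hglsc : LowerSemicontinuous g) (hgconv : EConvexOn g)
    {xbar : En n} (hxbar : xbar ∈ ArgminSet f g)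
    {lam : ℝ} (hlam : 0 < lam) (y : En n) :
    ∃ p : En n, ‖p - y‖ ≤ ‖xbar - y‖ ∧
      (lam⁻¹ • (y - p) - f' xbar) ∈ ESubdiff g p ∧
      (g y ≠ ⊤ → (g xbar).toReal + ‖p - y‖ ^ 2 / (2 * lam) ≤
        (g y).toReal + ⟪f' xbar, y - xbar⟫) := by
  have hsub := neg_grad_mem_subdiff hfconv hgrad hgradcont hgproper hgconv hxbar
  have hxt : g xbar ≠ ⊤ := argmin_g_ne_top hgproper hxbar
  set a : ℝ := (g xbar).toReal with ha'
  have ha : g xbar = (a : EReal) := (EReal.coe_toReal hxt (hgproper.1 xbar)).symm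
  -- the lower bound from the subgradient at xbar
  have L3 : ∀ z : En n, g z ≠ ⊤ → a ≤ (g z).toReal + ⟪f' xbar, z - xbar⟫ := by
    intro z hz
    have h := hsub z
    rw [ha, (EReal.coe_toReal hz (hgproper.1 z)).symm, ← EReal.coe_add,
      EReal.coe_le_coe_iff] at h
    have : ⟪-f' xbar, z - xbar⟫ = -⟪f' xbar, z - xbar⟫ := inner_neg_left _ _
    rw [this] at h
    linarith
  set c : En n → ℝ := fun z => ⟪f' xbar, z - xbar⟫ + ‖z - y‖ ^ 2 / (2 * lam) with hc
  set Φ : En n → EReal := fun z => g z + ((c z : ℝ) : EReal) with hΦdef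
  have hccont : Continuous c := by
    apply Continuous.add
    · exact (continuous_const.inner (continuous_id.sub continuous_const))
    · exact (((continuous_id.sub continuous_const).norm.pow 2).div_const _)
  have hΦlsc : LowerSemicontinuous Φ :=
    hglsc.add' (continuous_coe_real_ereal.comp hccont).lowerSemicontinuous
      (fun x => EReal.continuousAt_add (Or.inr (EReal.coe_ne_bot _))
        (Or.inr (EReal.coe_ne_top _)))
  set R : ℝ := ‖xbar - y‖ with hR
  have hΦxbar : Φ xbar = ((a + R ^ 2 / (2 * lam) : ℝ) : EReal) := by
    rw [hΦdef]
    simp only [hc]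
    rw [ha]
    norm_num [← EReal.coe_add, hR]
  obtain ⟨p, hpK, hpmin⟩ := lsc_exists_min (isCompact_closedBall y R)
    ⟨xbar, by simp [mem_closedBall, dist_eq_norm, hR]⟩ hΦlsc
  have hglobal : ∀ z : En n, Φ p ≤ Φ z := by
    intro z
    by_cases hzK : z ∈ closedBall y R
    · exact hpmin z hzK
    by_cases hz : g z = ⊤
    · rw [hΦdef]; simp only [hz]
      rw [EReal.top_add_coe]
      exact le_top
    have hzR : R ≤ ‖z - y‖ := by
      simp only [mem_closedBall, dist_eq_norm, not_le] at hzK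
      exact hzK.le
    calc Φ p ≤ Φ xbar := hpmin xbar (by simp [mem_closedBall, dist_eq_norm, hR])
    _ ≤ Φ z := by
        rw [hΦxbar, hΦdef]
        show _ ≤ g z + ((c z : ℝ) : EReal)
        rw [(EReal.coe_toReal hz (hgproper.1 z)).symm, ← EReal.coe_add, EReal.coe_le_coe_iff]
        have h1 := L3 z hz
        have h2 : R ^ 2 / (2 * lam) ≤ ‖z - y‖ ^ 2 / (2 * lam) := by
          have hR0 : (0:ℝ) ≤ R := by rw [hR]; exact norm_nonneg _
          have hp := pow_le_pow_left₀ hR0 hzR 2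
          exact (div_le_div_iff_of_pos_right (by positivity)).mpr hp
        simp only [hc]
        linarith [h1, h2]
  -- p has finite g value
  have hpt : g p ≠ ⊤ := by
    intro contra
    have h := hpmin xbar (by simp [mem_closedBall, dist_eq_norm, hR])
    rw [hΦxbar, hΦdef] at h
    simp only [contra, EReal.top_add_coe, top_le_iff] at h
    exact (EReal.coe_ne_top _) h
  set gp : ℝ := (g p).toReal with hgp'
  have hgp : g p = (gp : EReal) := (EReal.coe_toReal hpt (hgproper.1 p)).symm
  -- real form of minimality
  have hreal : ∀ z : En n, g z ≠ ⊤ → gp + c p ≤ (g z).toReal + c z := by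
    intro z hz
    have h := hglobal z
    rw [hΦdef] at h
    simp only at h
    rw [hgp, (EReal.coe_toReal hz (hgproper.1 z)).symm, ← EReal.coe_add, ← EReal.coe_add,
      EReal.coe_le_coe_iff] at h
    exact h
  have hLp : a ≤ gp + ⟪f' xbar, p - xbar⟫ := L3 p hpt
  refine ⟨p, ?_, ?_, ?_⟩
  · -- ‖p - y‖ ≤ ‖xbar - y‖
    have h := hreal xbar hxt
    rw [← ha'] at h
    simp only [hc] at h
    have hxx : (⟪f' xbar, xbar - xbar⟫ : ℝ) = 0 := by simp
    rw [hxx] at h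
    have h2l : (0:ℝ) < 2 * lam := by positivity
    have h6 : ‖p - y‖ ^ 2 / (2 * lam) ≤ ‖xbar - y‖ ^ 2 / (2 * lam) := by linarith
    have h7 : ‖p - y‖ ^ 2 ≤ ‖xbar - y‖ ^ 2 := by
      calc ‖p - y‖ ^ 2 = ‖p - y‖ ^ 2 / (2 * lam) * (2 * lam) := by field_simp
      _ ≤ ‖xbar - y‖ ^ 2 / (2 * lam) * (2 * lam) :=
          mul_le_mul_of_nonneg_right h6 h2l.le
      _ = ‖xbar - y‖ ^ 2 := by field_simp
    have := Real.sqrt_le_sqrt h7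
    rwa [Real.sqrt_sq (norm_nonneg _), Real.sqrt_sq (norm_nonneg _)] at this
  · -- subgradient property
    intro z
    by_cases hz : g z = ⊤
    · rw [hz]; exact le_top
    set gz : ℝ := (g z).toReal with hgz'
    have hgz : g z = (gz : EReal) := (EReal.coe_toReal hz (hgproper.1 z)).symm
    rw [hgp, hgz, ← EReal.coe_add, EReal.coe_le_coe_iff]
    set A : ℝ := (gz - gp) + ⟪f' xbar, z - p⟫ + ⟪p - y, z - p⟫ / lam with hA
    set B : ℝ := ‖z - p‖ ^ 2 / (2 * lam) with hB
    have key : ∀ s : ℝ, s ∈ Ioc (0:ℝ) 1 → 0 ≤ A + s * B := by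
      rintro s ⟨hs0, hs1⟩
      set zs := p + s • (z - p) with hzs
      have hzseq : (1 - s) • p + s • z = zs := by rw [hzs]; module
      have hconv := hgconv p z (1 - s) s (by linarith) hs0.le (by ring)
      rw [hzseq, hgp, hgz] at hconv
      have h2 : g zs ≤ (((1 - s) * gp + s * gz : ℝ) : EReal) := by
        rw [← EReal.coe_mul, ← EReal.coe_mul, ← EReal.coe_add] at hconv; exact hconv
      have hzst : g zs ≠ ⊤ := fun contra => by
        rw [contra] at h2; exact (EReal.coe_ne_top _) (top_le_iff.mp h2)
      have h3 := hreal zs hzst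
      have h4 : (g zs).toReal ≤ (1 - s) * gp + s * gz := by
        rw [(EReal.coe_toReal hzst (hgproper.1 zs)).symm, EReal.coe_le_coe_iff] at h2
        exact h2
      have hinner : ⟪f' xbar, zs - xbar⟫ = ⟪f' xbar, p - xbar⟫ + s * ⟪f' xbar, z - p⟫ := by
        have : zs - xbar = (p - xbar) + s • (z - p) := by rw [hzs]; abel
        rw [this, inner_add_right, real_inner_smul_right]
      have hnorm : ‖zs - y‖ ^ 2 = ‖p - y‖ ^ 2 + 2 * (s * ⟪p - y, z - p⟫)
          + s ^ 2 * ‖z - p‖ ^ 2 := by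
        have h5 : zs - y = (p - y) + s • (z - p) := by rw [hzs]; abel
        rw [h5, norm_add_sq_real, real_inner_smul_right, norm_smul, Real.norm_eq_abs,
          abs_of_pos hs0, mul_pow]
      simp only [hc] at h3
      rw [hinner, hnorm] at h3
      have hsplit : (‖p - y‖ ^ 2 + 2 * (s * ⟪p - y, z - p⟫) + s ^ 2 * ‖z - p‖ ^ 2) / (2 * lam)
          = ‖p - y‖ ^ 2 / (2 * lam)
            + (s * (⟪p - y, z - p⟫ / lam) + s * (s * (‖z - p‖ ^ 2 / (2 * lam)))) := by
        field_simp
        ring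
      rw [hsplit] at h3
      have hs' : 0 ≤ s * ((gz - gp) + ⟪f' xbar, z - p⟫ + ⟪p - y, z - p⟫ / lam
          + s * (‖z - p‖ ^ 2 / (2 * lam))) := by nlinarith [h3, h4]
      have hs'' : 0 ≤ (gz - gp) + ⟪f' xbar, z - p⟫ + ⟪p - y, z - p⟫ / lam
          + s * (‖z - p‖ ^ 2 / (2 * lam)) := nonneg_of_mul_nonneg_right hs' hs0
      rw [hA, hB]
      linarith [hs'']
    have htend : Tendsto (fun s : ℝ => A + s * B) (𝓝[>] 0) (𝓝 A) := by
      have hco : Continuous fun s : ℝ => A + s * B :=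
        continuous_const.add (continuous_id'.mul continuous_const)
      have := hco.tendsto 0
      simp only [zero_mul, add_zero] at this
      exact this.mono_left nhdsWithin_le_nhds
    have hev : ∀ᶠ s in 𝓝[>] (0:ℝ), (0:ℝ) ≤ A + s * B := by
      filter_upwards [Ioc_mem_nhdsGT_of_mem (by norm_num : (0:ℝ) ∈ Ico (0:ℝ) 1)] with s hs
      exact key s hs
    have hApos : 0 ≤ A := ge_of_tendsto htend hev
    -- now conclude: gp + ⟪lam⁻¹ • (y-p) - f' xbar, z - p⟫ ≤ gz
    have hip : ⟪lam⁻¹ • (y - p) - f' xbar, z - p⟫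
        = ⟪y - p, z - p⟫ / lam - ⟪f' xbar, z - p⟫ := by
      rw [inner_sub_left, real_inner_smul_left, div_eq_inv_mul]
    rw [hip]
    have hneg : (⟪p - y, z - p⟫ : ℝ) = -⟪y - p, z - p⟫ := by
      have hpy : p - y = -(y - p) := by abel
      rw [hpy, inner_neg_left]
    rw [hA, hneg] at hApos
    have hdd : -⟪y - p, z - p⟫ / lam = -(⟪y - p, z - p⟫ / lam) := by ring
    rw [hdd] at hApos
    linarith [hApos]
  · -- growth
    intro hy
    have h := hreal y hy
    simp only [hc] at h
    have hyy : ‖y - y‖ = 0 := by simp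
    rw [hyy] at h
    have h0 : (0:ℝ) ^ 2 / (2 * lam) = 0 := by norm_num
    rw [h0] at h
    linarith [hLp, h]

end AuxLemmasForStatement6

/-- If `∂g` is strongly metrically `q`-subregular at `(x̄, -∇f(x̄))`,
then `∇f + ∂g` is metrically `q`-subregular at `(x̄, 0)`. -/
theorem q_subregular_of_strong_q_subregular {n : ℕ}
    (f : En n → ℝ) (f' : En n → En n) (g : En n → EReal)
    (hfconv : ConvexOn ℝ Set.univ f)
    (hgrad : ∀ x, HasGradientAt f (f' x) x)
    (hgradcont : Continuous f')
    (hgproper : ProperFun g) (hglsc : LowerSemicontinuous g) (hgconv : EConvexOn g)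
    (hXne : (ArgminSet f g).Nonempty)
    (xbar : En n) (hxbar : xbar ∈ ArgminSet f g)
    (q : ℝ) (hq : 0 < q)
    (hstrong : ∃ κ > (0 : ℝ), ∃ ε > (0 : ℝ), ∀ x : En n, ‖x - xbar‖ < ε →
      ∀ v ∈ ESubdiff g x, ‖x - xbar‖ ≤ κ * ‖-f' xbar - v‖ ^ q) :
    ∃ κ' > (0 : ℝ), ∃ ε' > (0 : ℝ), ∀ x : En n, ‖x - xbar‖ < ε' →
      ∀ v ∈ ESubdiff g x,
        Metric.infDist x (ArgminSet f g) ≤ κ' * ‖f' x + v‖ ^ q := by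
  obtain ⟨κ, hκ, ε, hε, hs⟩ := hstrong
  refine ⟨(8:ℝ) ^ q * (2 * κ), by positivity, ε / 2, by positivity, ?_⟩
  intro x hx v hv
  set t := ‖x - xbar‖ with ht
  have ht0 : 0 ≤ t := norm_nonneg _
  have hdist : Metric.infDist x (ArgminSet f g) ≤ t := by
    rw [ht, ← dist_eq_norm]
    exact Metric.infDist_le_dist_of_mem hxbar
  rcases eq_or_lt_of_le ht0 with h0 | h0
  · exact hdist.trans (le_trans h0.symm.le (by positivity))
  -- t > 0
  set lam := (2 * κ) ^ (1/q) * t ^ (1 - 1/q) with hlamdef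
  have h2κ : (0:ℝ) < 2 * κ := by linarith
  have hlam0 : 0 < lam := by positivity
  obtain ⟨p, hp1, hp2, hp3⟩ := prox_step hfconv hgrad hgradcont hgproper hglsc hgconv
    hxbar hlam0 x
  have hr : ‖p - x‖ ≤ t := hp1.trans_eq (norm_sub_rev xbar x)
  have htlam : t / lam = t ^ (1/q) / (2 * κ) ^ (1/q) := by
    have h1 : t = t ^ (1/q) * t ^ (1 - 1/q) := by
      rw [← Real.rpow_add h0, ← Real.rpow_one t]
      norm_num
    rw [hlamdef]
    nth_rewrite 1 [h1]
    rw [mul_div_mul_right _ _ (ne_of_gt (Real.rpow_pos_of_pos h0 _))]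
  have htlamq : (t / lam) ^ q = t / (2 * κ) := by
    rw [htlam, Real.div_rpow (Real.rpow_nonneg ht0 _) (Real.rpow_nonneg h2κ.le _),
      ← Real.rpow_mul ht0, ← Real.rpow_mul h2κ.le, one_div_mul_cancel hq.ne',
      Real.rpow_one, Real.rpow_one]
  have hpxε : ‖p - xbar‖ < ε := by
    have htri : ‖p - xbar‖ ≤ ‖p - x‖ + ‖x - xbar‖ := by
      have : p - xbar = (p - x) + (x - xbar) := by abel
      rw [this]; exact norm_add_le _ _
    have : t < ε / 2 := hx
    linarith
  have hstrongp := hs p hpxε _ hp2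
  have hnorm_vp : ‖-f' xbar - (lam⁻¹ • (x - p) - f' xbar)‖ = ‖p - x‖ / lam := by
    have heq : -f' xbar - (lam⁻¹ • (x - p) - f' xbar) = -(lam⁻¹ • (x - p)) := by abel
    rw [heq, norm_neg, norm_smul, Real.norm_eq_abs, abs_of_pos (inv_pos.mpr hlam0),
      norm_sub_rev, div_eq_inv_mul]
  rw [hnorm_vp] at hstrongp
  have hkey : κ * (‖p - x‖ / lam) ^ q ≤ t / 2 := by
    have hmono : (‖p - x‖ / lam) ^ q ≤ (t / lam) ^ q := by
      apply Real.rpow_le_rpow (by positivity) _ hq.le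
      exact div_le_div_of_nonneg_right hr hlam0.le
    calc κ * (‖p - x‖ / lam) ^ q ≤ κ * (t / lam) ^ q := by
          exact mul_le_mul_of_nonneg_left hmono hκ.le
    _ = κ * (t / (2 * κ)) := by rw [htlamq]
    _ = t / 2 := by field_simp
  have hpxbar : ‖p - xbar‖ ≤ t / 2 := hstrongp.trans hkey
  have hrlow : t / 2 ≤ ‖p - x‖ := by
    have htri : t ≤ ‖x - p‖ + ‖p - xbar‖ := by
      have h5 : x - xbar = (x - p) + (p - xbar) := by abel
      rw [ht, h5]; exact norm_add_le _ _
    rw [norm_sub_rev x p] at htri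
    linarith
  -- function-value estimates
  have hgx : g x ≠ ⊤ := subdiff_g_ne_top hgproper hv
  have hgrow := hp3 hgx
  have hxt : g xbar ≠ ⊤ := by
    intro contra
    obtain ⟨y₀, hy₀⟩ := hgproper.2
    have h := hxbar y₀
    rw [contra] at h
    rw [EReal.add_top_of_ne_bot (by simp), top_le_iff] at h
    exact (EReal.add_lt_top (by simp) hy₀).ne h
  -- from hv at xbar (real form)
  have hvx : (g x).toReal + ⟪v, xbar - x⟫ ≤ (g xbar).toReal := by
    have h := hv xbar
    rw [(EReal.coe_toReal hgx (hgproper.1 x)).symm,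
      (EReal.coe_toReal hxt (hgproper.1 xbar)).symm, ← EReal.coe_add,
      EReal.coe_le_coe_iff] at h
    exact h
  have hf1 : f x + ⟪f' x, xbar - x⟫ ≤ f xbar := grad_ineq hfconv (hgrad x) xbar
  have hf2 : f xbar + ⟪f' xbar, x - xbar⟫ ≤ f x := grad_ineq hfconv (hgrad xbar) x
  have hCS : ⟪f' x + v, x - xbar⟫ ≤ ‖f' x + v‖ * t := by
    calc ⟪f' x + v, x - xbar⟫ ≤ ‖f' x + v‖ * ‖x - xbar‖ := real_inner_le_norm _ _
    _ = ‖f' x + v‖ * t := by rw [ht]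
  have hvsum : ⟪f' x + v, x - xbar⟫ = ⟪f' x, x - xbar⟫ + ⟪v, x - xbar⟫ :=
    inner_add_left _ _ _
  have hswap1 : (⟪f' x, xbar - x⟫ : ℝ) = -⟪f' x, x - xbar⟫ := by
    have h5 : xbar - x = -(x - xbar) := by abel
    rw [h5, inner_neg_right]
  have hswap2 : (⟪v, xbar - x⟫ : ℝ) = -⟪v, x - xbar⟫ := by
    have h5 : xbar - x = -(x - xbar) := by abel
    rw [h5, inner_neg_right]
  -- chain
  have hq2 : (t/2) ^ 2 / (2 * lam) ≤ ‖p - x‖ ^ 2 / (2 * lam) := by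
    exact div_le_div_of_nonneg_right (pow_le_pow_left₀ (by positivity) hrlow 2) (by positivity)
  have hchain : t ^ 2 / (8 * lam) ≤ ‖f' x + v‖ * t := by
    have e1 : t ^ 2 / (8 * lam) = (t/2) ^ 2 / (2 * lam) := by ring
    rw [e1]
    calc (t/2) ^ 2 / (2 * lam) ≤ ‖p - x‖ ^ 2 / (2 * lam) := hq2
    _ ≤ (g x).toReal + ⟪f' xbar, x - xbar⟫ - (g xbar).toReal := by linarith [hgrow]
    _ ≤ ⟪f' x + v, x - xbar⟫ := by
        rw [hvsum]
        rw [hswap1] at hf1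
        rw [hswap2] at hvx
        linarith
    _ ≤ ‖f' x + v‖ * t := hCS
  have hW : t / (8 * lam) ≤ ‖f' x + v‖ := by
    have e3 : t ^ 2 / (8 * lam) = t * (t / (8 * lam)) := by ring
    rw [e3] at hchain
    have e4 : t * (t / (8 * lam)) ≤ t * ‖f' x + v‖ := by linarith [hchain]
    exact le_of_mul_le_mul_left e4 h0
  -- finish with rpow algebra
  have hWt : t ^ (1/q) ≤ 8 * (2*κ) ^ (1/q) * ‖f' x + v‖ := by
    have e2 : t / (8 * lam) = t ^ (1/q) / (8 * (2*κ) ^ (1/q)) := by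
      have e5 : t / (8 * lam) = (t / lam) / 8 := by ring
      rw [e5, htlam]
      ring
    rw [e2] at hW
    have h9 : (0:ℝ) < 8 * (2*κ) ^ (1/q) := by positivity
    calc t ^ (1/q) = t ^ (1/q) / (8 * (2*κ) ^ (1/q)) * (8 * (2*κ) ^ (1/q)) := by
          field_simp
    _ ≤ ‖f' x + v‖ * (8 * (2*κ) ^ (1/q)) := mul_le_mul_of_nonneg_right hW h9.le
    _ = 8 * (2*κ) ^ (1/q) * ‖f' x + v‖ := by ring
  have hfinal : t ≤ (8:ℝ) ^ q * (2 * κ) * ‖f' x + v‖ ^ q := by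
    have h10 := Real.rpow_le_rpow (Real.rpow_nonneg ht0 _) hWt hq.le
    rw [← Real.rpow_mul ht0, one_div_mul_cancel hq.ne', Real.rpow_one] at h10
    rw [Real.mul_rpow (by positivity) (norm_nonneg _),
      Real.mul_rpow (by positivity) (Real.rpow_nonneg h2κ.le _),
      ← Real.rpow_mul h2κ.le, one_div_mul_cancel hq.ne', Real.rpow_one] at h10
    exact h10
  exact hdist.trans hfinal
end
end

section
/- Let x ∈ ℝⁿ with g(x) < ∞, let α > 0, let H be a symmetric n×n matrix with ⟨d, Hd⟩ ≥ α‖d‖² for all d, and define q(y) = f(x) + ⟨∇f(x), y − x⟩ + ½⟨y − x, H(y − x)⟩ + g(y). Let x̂ ∈ ℝⁿ satisfy q(x̂) ≤ q(x) and set d = x̂ − x. Then for every θ ∈ (0,1) and every τ with 0 < τ ≤ min{1, (1−θ)α/L₁}, one has F(x + τd) ≤ F(x) − (θατ/2)‖d‖². -/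
open scoped RealInnerProductSpace
open Metric Set Filter

noncomputable section

/-! Along the segment `x + τ d`, the descent lemma bounds `f` by its linearization plus
`L₁ τ² ‖d‖² / 2`, and convexity bounds `g` by `(1 - τ) g x + τ g xhat`. Scaled by `τ`, the model
decrease `q xhat ≤ q x` trades the linear terms for `-τ ⟪d, H d⟫ / 2 ≤ -α τ ‖d‖² / 2`, and the
step-size bound `τ L₁ ≤ (1 - θ) α` absorbs the quadratic error. -/

theorem le_add_inner_add_half_mul_sq_of_norm_gradient_sub_le
    {E : Type*} [NormedAddCommGroup E] [InnerProductSpace ℝ E] [CompleteSpace E]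
    {f : E → ℝ} {f' : E → E} {L : ℝ} (hgrad : ∀ y, HasGradientAt f (f' y) y) {x : E}
    (hlip : ∀ y, ‖f' y - f' x‖ ≤ L * ‖y - x‖) (v : E) :
    f (x + v) ≤ f x + ⟪f' x, v⟫ + L / 2 * ‖v‖ ^ 2 := by
  have hline : ∀ t : ℝ, HasDerivAt (fun t : ℝ => f (x + t • v)) ⟪f' (x + t • v), v⟫ t := by
    intro t
    have hpath : HasDerivAt (fun t : ℝ => x + t • v) v t := by
      simpa using ((hasDerivAt_id t).smul_const v).const_add x
    exact (hgrad (x + t • v)).hasFDerivAt.comp_hasDerivAt t hpath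
  have hmodel : ∀ t : ℝ,
      HasDerivAt (fun t : ℝ => f x + t * ⟪f' x, v⟫ + L / 2 * t ^ 2 * ‖v‖ ^ 2)
        (⟪f' x, v⟫ + L * t * ‖v‖ ^ 2) t := by
    intro t
    refine ((((hasDerivAt_id' t).mul_const ⟪f' x, v⟫).const_add (f x)).add
      (((hasDerivAt_pow 2 t).const_mul (L / 2)).mul_const (‖v‖ ^ 2))).congr_deriv ?_
    push_cast
    ring
  have hslope : ∀ t ∈ Ico (0 : ℝ) 1, ⟪f' (x + t • v), v⟫ ≤ ⟪f' x, v⟫ + L * t * ‖v‖ ^ 2 := by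
    rintro t ⟨ht0, -⟩
    calc ⟪f' (x + t • v), v⟫ = ⟪f' x, v⟫ + ⟪f' (x + t • v) - f' x, v⟫ := by
          rw [inner_sub_left]; ring
      _ ≤ ⟪f' x, v⟫ + ‖f' (x + t • v) - f' x‖ * ‖v‖ := by gcongr; exact real_inner_le_norm _ _
      _ ≤ ⟪f' x, v⟫ + L * (t * ‖v‖) * ‖v‖ := by
          gcongr
          simpa [norm_smul, abs_of_nonneg ht0] using hlip (x + t • v)
      _ = ⟪f' x, v⟫ + L * t * ‖v‖ ^ 2 := by ring
  simpa using image_le_of_deriv_right_le_deriv_boundary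
    (fun t _ => (hline t).continuousAt.continuousWithinAt)
    (fun t _ => (hline t).hasDerivWithinAt) (by simp)
    (fun t _ => (hmodel t).continuousAt.continuousWithinAt)
    (fun t _ => (hmodel t).hasDerivWithinAt) hslope (right_mem_Icc.2 zero_le_one)

theorem EConvexOn.le_coe_of_eq_coe {n : ℕ} {g : En n → EReal} (hg : EConvexOn g) {x y : En n}
    {a b : ℝ} (hx : g x = a) (hy : g y = b) {τ : ℝ} (h0 : 0 ≤ τ) (h1 : τ ≤ 1) :
    g (x + τ • (y - x)) ≤ ((1 - τ) * a + τ * b : ℝ) := by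
  have h := hg x y (1 - τ) τ (by linarith) h0 (by ring)
  rw [hx, hy] at h
  convert h using 1
  · congr 1; module
  · norm_cast

theorem line_search_decrease_general {n : ℕ}
    (f : En n → ℝ) (f' : En n → En n) (g : En n → EReal)
    (L₁ : ℝ) (hL₁ : 0 < L₁)
    (hgrad : ∀ x, HasGradientAt f (f' x) x)
    (hlip : ∀ x y : En n, ‖f' x - f' y‖ ≤ L₁ * ‖x - y‖)
    (hgproper : ProperFun g) (hgconv : EConvexOn g)
    (x : En n) (hgx : g x ≠ ⊤)
    (α : ℝ)
    (H : En n →L[ℝ] En n)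
    (hHpd : ∀ d : En n, α * ‖d‖ ^ 2 ≤ ⟪d, H d⟫)
    (xhat : En n)
    (hq : ((f x + ⟪f' x, xhat - x⟫ + ⟪xhat - x, H (xhat - x)⟫ / 2 : ℝ) : EReal) + g xhat ≤
      (f x : EReal) + g x)
    (θ : ℝ)
    (τ : ℝ) (hτ0 : 0 < τ) (hτ : τ ≤ min 1 ((1 - θ) * α / L₁)) :
    (f (x + τ • (xhat - x)) : EReal) + g (x + τ • (xhat - x)) ≤
      ((f x : EReal) + g x) - ((θ * α * τ / 2 * ‖xhat - x‖ ^ 2 : ℝ) : EReal) := by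
  set d := xhat - x
  have hτ1 : τ ≤ 1 := hτ.trans (min_le_left _ _)
  have hτL : τ * L₁ ≤ (1 - θ) * α := (le_div_iff₀ hL₁).1 (hτ.trans (min_le_right _ _))
  lift g x to ℝ using ⟨hgx, hgproper.1 x⟩ with a ha
  have hgxhat : g xhat ≠ ⊤ := by
    intro htop
    rw [htop, EReal.coe_add_top, top_le_iff, ← EReal.coe_add] at hq
    exact EReal.coe_ne_top _ hq
  lift g xhat to ℝ using ⟨hgxhat, hgproper.1 xhat⟩ with b hb
  have hmodel : ⟪f' x, d⟫ + ⟪d, H d⟫ / 2 + b ≤ a := by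
    norm_cast at hq
    linarith
  have hfy : f (x + τ • d) ≤ f x + τ * ⟪f' x, d⟫ + L₁ / 2 * (τ ^ 2 * ‖d‖ ^ 2) := by
    simpa [real_inner_smul_right, norm_smul, mul_pow, abs_of_pos hτ0] using
      le_add_inner_add_half_mul_sq_of_norm_gradient_sub_le hgrad (fun y => hlip y x) (τ • d)
  have hgy := hgconv.le_coe_of_eq_coe ha.symm hb.symm hτ0.le hτ1
  calc (f (x + τ • d) : EReal) + g (x + τ • d)
      ≤ (f (x + τ • d) : EReal) + ((1 - τ) * a + τ * b : ℝ) := by gcongr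
    _ ≤ ((f x + a - θ * α * τ / 2 * ‖d‖ ^ 2 : ℝ) : EReal) := by
      norm_cast
      have hmodel_τ := mul_le_mul_of_nonneg_left hmodel hτ0.le
      have hHpd_τ := mul_le_mul_of_nonneg_left (hHpd d) hτ0.le
      have hstep := mul_le_mul_of_nonneg_left
        (mul_le_mul_of_nonneg_right hτL (sq_nonneg ‖d‖)) hτ0.le
      linarith
    _ = _ := by push_cast; rfl

/-- If `xhat` satisfies `q(xhat) ≤ q(x)` for the quadratic model `q` built
with a symmetric `H` satisfying `⟨d, Hd⟩ ≥ α‖d‖²`, then for every `θ ∈ (0,1)` and every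
`τ ∈ (0, min{1, (1-θ)α/L₁}]` one has `F(x + τ d) ≤ F(x) - (θατ/2)‖d‖²`, where `d = xhat - x`. -/
theorem line_search_decrease {n : ℕ}
    (f : En n → ℝ) (f' : En n → En n) (g : En n → EReal)
    (L₁ : ℝ) (hL₁ : 0 < L₁)
    (hfconv : ConvexOn ℝ Set.univ f)
    (hgrad : ∀ x, HasGradientAt f (f' x) x)
    (hgradcont : Continuous f')
    (hlip : ∀ x y : En n, ‖f' x - f' y‖ ≤ L₁ * ‖x - y‖)
    (hgproper : ProperFun g) (hglsc : LowerSemicontinuous g) (hgconv : EConvexOn g)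
    (x : En n) (hgx : g x ≠ ⊤)
    (α : ℝ) (hα : 0 < α)
    (H : En n →L[ℝ] En n)
    (hHsymm : ∀ u v : En n, ⟪H u, v⟫ = ⟪u, H v⟫)
    (hHpd : ∀ d : En n, α * ‖d‖ ^ 2 ≤ ⟪d, H d⟫)
    (xhat : En n)
    (hq : ((f x + ⟪f' x, xhat - x⟫ + ⟪xhat - x, H (xhat - x)⟫ / 2 : ℝ) : EReal) + g xhat ≤
      (f x : EReal) + g x)
    (θ : ℝ) (hθ0 : 0 < θ) (hθ1 : θ < 1)
    (τ : ℝ) (hτ0 : 0 < τ) (hτ : τ ≤ min 1 ((1 - θ) * α / L₁)) :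
    (f (x + τ • (xhat - x)) : EReal) + g (x + τ • (xhat - x)) ≤
      ((f x : EReal) + g x) - ((θ * α * τ / 2 * ‖xhat - x‖ ^ 2 : ℝ) : EReal) :=
  line_search_decrease_general f f' g L₁ hL₁ hgrad hlip hgproper hgconv x hgx α H hHpd xhat hq θ τ
    hτ0 hτ
end
end

section
/- Let (x^k) be a sequence in ℝⁿ with F(x⁰) < ∞, suppose F is bounded below on ℝⁿ, and suppose there are constants c₀, c, ᾱ > 0 and ρ ∈ (0,1] such that for all k, F(x^{k+1}) ≤ F(x^k) − c₀ · α_k² · ‖𝒢(x^k)‖², where α_k = min{ᾱ, c‖𝒢(x^k)‖^ρ}. Then ‖𝒢(x^k)‖ → 0 as k → ∞. -/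
open scoped RealInnerProductSpace
open Metric Set Filter

noncomputable section

/- Sufficient decrease makes `∑ c₀ α_k² ‖𝒢(x^k)‖²` telescope against the bounded-below values `F(x^k)`,
so these terms tend to zero; since `t ↦ c₀ min{ᾱ, c t^ρ}² t²` is monotone on `[0, ∞)` and positive
for `t > 0`, this forces `‖𝒢(x^k)‖ → 0`. -/

theorem summable_of_succ_le_sub {G d : ℕ → ℝ} {m : ℝ} (hd : ∀ k, 0 ≤ d k)
    (hdec : ∀ k, G (k + 1) ≤ G k - d k) (hm : ∀ k, m ≤ G k) : Summable d :=
  summable_of_sum_range_le hd fun N =>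
    calc ∑ i ∈ Finset.range N, d i ≤ ∑ i ∈ Finset.range N, (G i - G (i + 1)) :=
          Finset.sum_le_sum fun i _ => by linarith [hdec i]
      _ = G 0 - G N := Finset.sum_range_sub' G N
      _ ≤ G 0 - m := by linarith [hm N]

namespace EReal

theorem ne_top_of_succ_le_sub {u : ℕ → EReal} {d : ℕ → ℝ} (hu0 : u 0 ≠ ⊤)
    (hdec : ∀ k, u (k + 1) ≤ u k - d k) (k : ℕ) : u k ≠ ⊤ := by
  induction k with
  | zero => exact hu0
  | succ k ih =>
    refine ne_top_of_le_ne_top ?_ (hdec k)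
    by_cases hbot : u k = ⊥
    · simp [hbot]
    · rw [← coe_toReal ih hbot, ← coe_sub]
      exact coe_ne_top _

theorem summable_of_succ_le_sub {u : ℕ → EReal} {d : ℕ → ℝ} {m : ℝ} (hu0 : u 0 ≠ ⊤)
    (hd : ∀ k, 0 ≤ d k) (hdec : ∀ k, u (k + 1) ≤ u k - d k) (hm : ∀ k, (m : EReal) ≤ u k) :
    Summable d := by
  have hcoe (k : ℕ) : ((u k).toReal : EReal) = u k :=
    coe_toReal (ne_top_of_succ_le_sub hu0 hdec k) (ne_bot_of_le_ne_bot (coe_ne_bot m) (hm k))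
  refine _root_.summable_of_succ_le_sub (G := fun k => (u k).toReal) (m := m) hd (fun k => ?_)
    (fun k => ?_)
  · have h := hdec k
    rw [← hcoe k, ← hcoe (k + 1), ← coe_sub] at h
    exact_mod_cast h
  · have h := hm k
    rw [← hcoe] at h
    exact_mod_cast h

end EReal

theorem tendsto_zero_of_tendsto_comp_zero {ι : Type*} {l : Filter ι} {φ : ℝ → ℝ}
    (hφ : MonotoneOn φ (Ici 0)) (hpos : ∀ t, 0 < t → 0 < φ t) {t : ι → ℝ} (ht : ∀ i, 0 ≤ t i)
    (h : Tendsto (fun i => φ (t i)) l (nhds 0)) : Tendsto t l (nhds 0) := by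
  refine tendsto_order.2 ⟨fun a ha => Eventually.of_forall fun i => ha.trans_le (ht i),
    fun ε hε => ?_⟩
  filter_upwards [(tendsto_order.1 h).2 _ (hpos ε hε)] with i hi
  by_contra! hle
  exact (hφ hε.le (hε.le.trans hle) hle).not_gt hi

section DescentRate

variable {c₀ c ᾱ ρ : ℝ}

theorem monotoneOn_descentRate (hc₀ : 0 ≤ c₀) (hc : 0 ≤ c) (hᾱ : 0 ≤ ᾱ) (hρ : 0 ≤ ρ) :
    MonotoneOn (fun t : ℝ => c₀ * (min ᾱ (c * t ^ ρ)) ^ 2 * t ^ 2) (Ici 0) := by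
  intro a (ha : 0 ≤ a) b _ hab
  have hmin : 0 ≤ min ᾱ (c * a ^ ρ) := le_min hᾱ (by positivity)
  dsimp only
  gcongr

theorem descentRate_pos (hc₀ : 0 < c₀) (hc : 0 < c) (hᾱ : 0 < ᾱ) {t : ℝ} (ht : 0 < t) :
    0 < c₀ * (min ᾱ (c * t ^ ρ)) ^ 2 * t ^ 2 := by
  have : 0 < min ᾱ (c * t ^ ρ) := lt_min hᾱ (by positivity)
  positivity

end DescentRate

theorem Gmap_tendsto_zero_general {n : ℕ}
    (f : En n → ℝ) (f' : En n → En n) (g : En n → EReal) (prox : En n → En n)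
    (x : ℕ → En n)
    (hF0 : (f (x 0) : EReal) + g (x 0) ≠ ⊤)
    (hbd : ∃ m : ℝ, ∀ z : En n, (m : EReal) ≤ (f z : EReal) + g z)
    (c₀ c ᾱ : ℝ) (hc₀ : 0 < c₀) (hc : 0 < c) (hᾱ : 0 < ᾱ)
    (ρ : ℝ) (hρ0 : 0 < ρ)
    (hdec : ∀ k : ℕ, (f (x (k + 1)) : EReal) + g (x (k + 1)) ≤
      ((f (x k) : EReal) + g (x k)) -
        ((c₀ * (min ᾱ (c * ‖Gmap f' prox (x k)‖ ^ ρ)) ^ 2 *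
          ‖Gmap f' prox (x k)‖ ^ 2 : ℝ) : EReal)) :
    Tendsto (fun k => ‖Gmap f' prox (x k)‖) atTop (nhds 0) := by
  obtain ⟨m, hm⟩ := hbd
  have hφmono := monotoneOn_descentRate hc₀.le hc.le hᾱ.le hρ0.le
  have hsum := EReal.summable_of_succ_le_sub hF0
    (fun k => by positivity) hdec (fun k => hm (x k))
  exact tendsto_zero_of_tendsto_comp_zero hφmono (fun _ => descentRate_pos hc₀ hc hᾱ)
    (fun k => norm_nonneg _) hsum.tendsto_atTop_zero

/-- If `F(x⁰) < ∞`, `F` is bounded below, and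
`F(x^{k+1}) ≤ F(x^k) - c₀ α_k² ‖𝒢(x^k)‖²` with `α_k = min{ᾱ, c ‖𝒢(x^k)‖^ρ}`, then
`‖𝒢(x^k)‖ → 0`. -/
theorem Gmap_tendsto_zero {n : ℕ}
    (f : En n → ℝ) (f' : En n → En n) (g : En n → EReal) (prox : En n → En n)
    (hfconv : ConvexOn ℝ Set.univ f)
    (hgrad : ∀ x, HasGradientAt f (f' x) x)
    (hgradcont : Continuous f')
    (hgproper : ProperFun g) (hglsc : LowerSemicontinuous g) (hgconv : EConvexOn g)
    (hprox : IsProxMap g prox)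
    (x : ℕ → En n)
    (hF0 : (f (x 0) : EReal) + g (x 0) ≠ ⊤)
    (hbd : ∃ m : ℝ, ∀ z : En n, (m : EReal) ≤ (f z : EReal) + g z)
    (c₀ c ᾱ : ℝ) (hc₀ : 0 < c₀) (hc : 0 < c) (hᾱ : 0 < ᾱ)
    (ρ : ℝ) (hρ0 : 0 < ρ) (hρ1 : ρ ≤ 1)
    (hdec : ∀ k : ℕ, (f (x (k + 1)) : EReal) + g (x (k + 1)) ≤
      ((f (x k) : EReal) + g (x k)) -
        ((c₀ * (min ᾱ (c * ‖Gmap f' prox (x k)‖ ^ ρ)) ^ 2 *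
          ‖Gmap f' prox (x k)‖ ^ 2 : ℝ) : EReal)) :
    Tendsto (fun k => ‖Gmap f' prox (x k)‖) atTop (nhds 0) :=
  Gmap_tendsto_zero_general f f' g prox x hF0 hbd c₀ c ᾱ hc₀ hc hᾱ ρ hρ0 hdec
end
end
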